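/- arXiv:2411.13684 — 5 statements merged into one kernel-verified Lean document; each statement's English description precedes it below -/
import Mathlib

section
/- Let i ∈ N and let C be a component of the subdigraph Γ_F^i that does not contain the empty profile ∅_M. If a value Φ satisfies the Null agent axiom, then Φ_i applied to the coalition profile function Σ_{K∈C} 1_K equals 0. -/
open scoped Classical
open Finset

namespace GCC

variable {α ι : Type*} [Fintype α] [DecidableEq α] [Fintype ι] [DecidableEq ι]

/-- `K'` covers `K` in the set system `Fq`: both are feasible, `K ⊂ K'`, and no feasible
coalition lies strictly between them. -/
def coverEdge (Fq : Finset (Finset α)) (K K' : Finset α) : Prop :=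
  K ∈ Fq ∧ K' ∈ Fq ∧ K ⊂ K' ∧ ∀ K'' ∈ Fq, K ⊆ K'' → K'' ⊂ K' → K'' = K

/-- A generalized coalition configuration: the coalitions `P q` are nonempty and cover the
agent set, and each `(P q, F q)` is a normal set system. -/
def IsGCC (P : ι → Finset α) (F : ι → Finset (Finset α)) : Prop :=
  (∀ q, (P q).Nonempty) ∧ (∀ i : α, ∃ q, i ∈ P q) ∧
    (∀ q, ∀ K ∈ F q, K ⊆ P q) ∧ (∀ q, (∅ : Finset α) ∈ F q) ∧ ∀ q, P q ∈ F q

/-- A coalition profile is feasible if each coordinate is a feasible coalition. -/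
def Feasible (F : ι → Finset (Finset α)) (K : ι → Finset α) : Prop :=
  ∀ q, K q ∈ F q

/-- The empty coalition profile `∅_M`. -/
def emptyProfile : ι → Finset α := fun _ => ∅

/-- Directed edge of the product digraph `Γ_F`: both endpoints feasible, and the
profiles agree everywhere except at a (necessarily unique) coordinate `q`, where a
covering step of `Γ_{F q}` occurs. -/
def prodEdge (F : ι → Finset (Finset α)) (K K' : ι → Finset α) : Prop :=
  Feasible F K ∧ Feasible F K' ∧
    ∃ q, coverEdge (F q) (K q) (K' q) ∧ ∀ r, r ≠ q → K' r = K r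

/-- The set `Q_{(K,K')}` of agents entering along the edge `(K, K')`. -/
def Qset (K K' : ι → Finset α) : Finset α :=
  Finset.univ.biUnion fun q => K' q \ K q

/-- Edge of the subdigraph `Γ_F^i` of agent `i`. -/
def agentEdge (F : ι → Finset (Finset α)) (i : α) (K K' : ι → Finset α) : Prop :=
  prodEdge F K K' ∧ i ∈ Qset K K'

/-- Flow conservation on the product digraph (at every vertex other than `∅_M` and `P`). -/
def IsFlow (P : ι → Finset α) (F : ι → Finset (Finset α))
    (Λ : (ι → Finset α) → (ι → Finset α) → ℝ) : Prop :=
  ∀ K : ι → Finset α, Feasible F K → K ≠ emptyProfile → K ≠ P →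
    (∑ K' : ι → Finset α, if prodEdge F K' K then Λ K' K else 0)
      = ∑ K' : ι → Finset α, if prodEdge F K K' then Λ K K' else 0

/-- The value of a flow on the product digraph: the total flow out of `∅_M`. -/
noncomputable def flowValue (F : ι → Finset (Finset α))
    (Λ : (ι → Finset α) → (ι → Finset α) → ℝ) : ℝ :=
  ∑ K : ι → Finset α, if prodEdge F emptyProfile K then Λ emptyProfile K else 0

/-- A unitary flow on the product digraph. -/
def IsUnitaryFlow (P : ι → Finset α) (F : ι → Finset (Finset α))
    (Λ : (ι → Finset α) → (ι → Finset α) → ℝ) : Prop :=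
  IsFlow P F Λ ∧ flowValue F Λ = 1

/-- `Φ` is marginalist with coefficient functions `lam`. -/
def MarginalistWith (F : ι → Finset (Finset α))
    (Φ : ((ι → Finset α) → ℝ) → α → ℝ)
    (lam : α → (ι → Finset α) → (ι → Finset α) → ℝ) : Prop :=
  ∀ v : (ι → Finset α) → ℝ, v emptyProfile = 0 → ∀ i : α,
    Φ v i = ∑ K : ι → Finset α, ∑ K' : ι → Finset α,
      if agentEdge F i K K' then lam i K K' * (v K' - v K) else 0

/-- `Φ` is a marginalist value. -/
def IsMarginalist (F : ι → Finset (Finset α))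
    (Φ : ((ι → Finset α) → ℝ) → α → ℝ) : Prop :=
  ∃ lam, MarginalistWith F Φ lam

/-- The edge function `Λ^Φ` induced by coefficient functions `lam`. -/
def edgeFlow (lam : α → (ι → Finset α) → (ι → Finset α) → ℝ)
    (K K' : ι → Finset α) : ℝ :=
  ∑ i ∈ Qset K K', lam i K K'

/-- `Φ` is a flow method: a marginalist value whose coefficients induce a unitary flow on
the product digraph. -/
def IsFlowMethod (P : ι → Finset α) (F : ι → Finset (Finset α))
    (Φ : ((ι → Finset α) → ℝ) → α → ℝ) : Prop :=
  ∃ lam, MarginalistWith F Φ lam ∧ IsUnitaryFlow P F (edgeFlow lam)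

/-- Linearity of a value. -/
def Linear (Φ : ((ι → Finset α) → ℝ) → α → ℝ) : Prop :=
  ∀ v v' : (ι → Finset α) → ℝ, v emptyProfile = 0 → v' emptyProfile = 0 → ∀ a : ℝ, ∀ i : α,
    Φ (fun K => a * v K + v' K) i = a * Φ v i + Φ v' i

/-- Agent `i` is null in `v`. -/
def NullIn (F : ι → Finset (Finset α)) (v : (ι → Finset α) → ℝ) (i : α) : Prop :=
  ∀ K K', agentEdge F i K K' → v K = v K'

/-- The Null agent axiom. -/
def NullAgentAxiom (F : ι → Finset (Finset α))
    (Φ : ((ι → Finset α) → ℝ) → α → ℝ) : Prop :=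
  ∀ v : (ι → Finset α) → ℝ, v emptyProfile = 0 → ∀ i : α, NullIn F v i → Φ v i = 0

/-- Efficiency: the worth of the coalition configuration is fully distributed. -/
def Efficient (P : ι → Finset α) (Φ : ((ι → Finset α) → ℝ) → α → ℝ) : Prop :=
  ∀ v : (ι → Finset α) → ℝ, v emptyProfile = 0 → (∑ i : α, Φ v i) = v P

/-- Symmetrized edge relation of `Γ_F^i` (quasi-path steps). -/
def symmEdge (F : ι → Finset (Finset α)) (i : α) (K K' : ι → Finset α) : Prop :=
  agentEdge F i K K' ∨ agentEdge F i K' K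

/-- `C` is a component of the subdigraph `Γ_F^i`: a maximal set of vertices of `Γ_F^i`
pairwise connected by quasi-paths. -/
def IsComponent (F : ι → Finset (Finset α)) (i : α)
    (C : Finset (ι → Finset α)) : Prop :=
  (∀ K ∈ C, ∃ K', symmEdge F i K K') ∧
    (∀ K ∈ C, ∀ K' ∈ C, Relation.ReflTransGen (symmEdge F i) K K') ∧
    ∀ C' : Finset (ι → Finset α), C ⊆ C' →
      (∀ K ∈ C', ∃ K'', symmEdge F i K K'') →
      (∀ K ∈ C', ∀ K' ∈ C', Relation.ReflTransGen (symmEdge F i) K K') → C' = C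

/-- The profile `K_S`: coordinate `P r` for `r ∈ S` and `∅` elsewhere. -/
def profileS (P : ι → Finset α) (S : Finset ι) : ι → Finset α :=
  fun r => if r ∈ S then P r else ∅

/-- The relevant profile `K_{S,K_q}`: coordinate `K_q` at `q`, `P r` for `r ∈ S ∖ {q}`,
and `∅` elsewhere. -/
def profileSK (P : ι → Finset α) (S : Finset ι) (q : ι) (Kq : Finset α) :
    ι → Finset α :=
  fun r => if r = q then Kq else if r ∈ S then P r else ∅

/-- Support `μ(K)` of a coalition profile. -/
def support (K : ι → Finset α) : Finset ι :=
  Finset.univ.filter fun q => K q ≠ ∅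

/-- A relevant coalition profile: feasible, and all coordinates except possibly one are
either full (`P r`) or empty. -/
def IsRelevantProfile (P : ι → Finset α) (F : ι → Finset (Finset α))
    (K : ι → Finset α) : Prop :=
  Feasible F K ∧ ∃ q, ∀ r, r ≠ q → K r = P r ∨ K r = ∅

/-- A relevant directed edge of the product digraph. -/
def relevantEdge (P : ι → Finset α) (F : ι → Finset (Finset α))
    (K K' : ι → Finset α) : Prop :=
  prodEdge F K K' ∧ IsRelevantProfile P F K ∧ IsRelevantProfile P F K'

/-- Edge of the `m`-dimensional directed hypercube `Γ_{F_M}` (vertices `R_S ≅ S ⊆ M`). -/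
def hcEdge (S T : Finset ι) : Prop :=
  ∃ q, q ∉ S ∧ T = insert q S

/-- Flow conservation on the directed hypercube. -/
def hcIsFlow (Λ : Finset ι → Finset ι → ℝ) : Prop :=
  ∀ S : Finset ι, S ≠ ∅ → S ≠ Finset.univ →
    (∑ T : Finset ι, if hcEdge T S then Λ T S else 0)
      = ∑ T : Finset ι, if hcEdge S T then Λ S T else 0

/-- The value of a flow on the directed hypercube. -/
noncomputable def hcFlowValue (Λ : Finset ι → Finset ι → ℝ) : ℝ :=
  ∑ T : Finset ι, if hcEdge ∅ T then Λ ∅ T else 0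

/-- Unitary flow on the directed hypercube. -/
def hcIsUnitaryFlow (Λ : Finset ι → Finset ι → ℝ) : Prop :=
  hcIsFlow Λ ∧ hcFlowValue Λ = 1

/-- Flow conservation on the covering digraph `Γ_{F_q}` of a set system. -/
def lowIsFlow (Fq : Finset (Finset α)) (Pq : Finset α)
    (Λ : Finset α → Finset α → ℝ) : Prop :=
  ∀ K ∈ Fq, K ≠ ∅ → K ≠ Pq →
    (∑ K' : Finset α, if coverEdge Fq K' K then Λ K' K else 0)
      = ∑ K' : Finset α, if coverEdge Fq K K' then Λ K K' else 0

/-- The value of a flow on `Γ_{F_q}`. -/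
noncomputable def lowFlowValue (Fq : Finset (Finset α)) (Λ : Finset α → Finset α → ℝ) : ℝ :=
  ∑ K' : Finset α, if coverEdge Fq ∅ K' then Λ ∅ K' else 0

/-- Unitary flow on `Γ_{F_q}`. -/
def lowIsUnitaryFlow (Fq : Finset (Finset α)) (Pq : Finset α)
    (Λ : Finset α → Finset α → ℝ) : Prop :=
  lowIsFlow Fq Pq Λ ∧ lowFlowValue Fq Λ = 1

/-- Marginalist value on the upper games (played on the directed hypercube by the
elements of `M`). -/
def hcMarginalistWith (ΦM : (Finset ι → ℝ) → ι → ℝ)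
    (lamM : ι → Finset ι → Finset ι → ℝ) : Prop :=
  ∀ vM : Finset ι → ℝ, vM ∅ = 0 → ∀ q : ι,
    ΦM vM q = ∑ S : Finset ι,
      if q ∉ S then lamM q S (insert q S) * (vM (insert q S) - vM S) else 0

/-- The edge flow induced on the hypercube by coefficient functions `lamM`. -/
def hcEdgeFlow (lamM : ι → Finset ι → Finset ι → ℝ) :
    Finset ι → Finset ι → ℝ :=
  fun S T => ∑ q ∈ T \ S, lamM q S T

/-- Flow method on the upper games. -/
def hcIsFlowMethodWith (ΦM : (Finset ι → ℝ) → ι → ℝ)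
    (lamM : ι → Finset ι → Finset ι → ℝ) : Prop :=
  hcMarginalistWith ΦM lamM ∧ hcIsUnitaryFlow (hcEdgeFlow lamM)

/-- Marginalist value on the `q`-lower games (played on `Γ_{F_q}` by the agents of `P_q`). -/
def lowMarginalistWith (Fq : Finset (Finset α))
    (Φq : (Finset α → ℝ) → α → ℝ) (lamq : α → Finset α → Finset α → ℝ) : Prop :=
  ∀ vq : Finset α → ℝ, vq ∅ = 0 → ∀ i : α,
    Φq vq i = ∑ K : Finset α, ∑ K' : Finset α,
      if coverEdge Fq K K' ∧ i ∈ K' \ K then lamq i K K' * (vq K' - vq K) else 0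

/-- The edge flow induced on `Γ_{F_q}` by coefficient functions `lamq`. -/
def lowEdgeFlow (lamq : α → Finset α → Finset α → ℝ) :
    Finset α → Finset α → ℝ :=
  fun K K' => ∑ i ∈ K' \ K, lamq i K K'

/-- Flow method on the `q`-lower games. -/
def lowIsFlowMethodWith (Fq : Finset (Finset α)) (Pq : Finset α)
    (Φq : (Finset α → ℝ) → α → ℝ) (lamq : α → Finset α → Finset α → ℝ) : Prop :=
  lowMarginalistWith Fq Φq lamq ∧ lowIsUnitaryFlow Fq Pq (lowEdgeFlow lamq)

/-- The `K_q`-upper game `v_M^{K_q}` obtained from a coalition profile function `v`. -/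
def upperGame (P : ι → Finset α) (v : (ι → Finset α) → ℝ) (q : ι)
    (Kq : Finset α) : Finset ι → ℝ :=
  fun S => if q ∈ S then v (profileSK P S q Kq) else v (profileS P S)

/-- The `q`-lower game `v_q` obtained from `v` and the upper flow method `Φ^M`. -/
def lowerGame (P : ι → Finset α) (ΦM : (Finset ι → ℝ) → ι → ℝ)
    (v : (ι → Finset α) → ℝ) (q : ι) : Finset α → ℝ :=
  fun Kq => ΦM (upperGame P v q Kq) q

/-- `Φ0` is obtained from `Φ^M` and the `Φ^q`'s through the two-step procedure. -/
def TwoStepOf (P : ι → Finset α) (ΦM : (Finset ι → ℝ) → ι → ℝ)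
    (Φq : ι → (Finset α → ℝ) → α → ℝ)
    (Φ0 : ((ι → Finset α) → ℝ) → α → ℝ) : Prop :=
  ∀ v : (ι → Finset α) → ℝ, v emptyProfile = 0 → ∀ i : α,
    Φ0 v i = ∑ q : ι, if i ∈ P q then Φq q (lowerGame P ΦM v q) i else 0

/-- `Φ0` is a two-step flow method. -/
def IsTwoStepFlowMethod (P : ι → Finset α) (F : ι → Finset (Finset α))
    (Φ0 : ((ι → Finset α) → ℝ) → α → ℝ) : Prop :=
  ∃ (ΦM : (Finset ι → ℝ) → ι → ℝ) (lamM : ι → Finset ι → Finset ι → ℝ)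
    (Φq : ι → (Finset α → ℝ) → α → ℝ) (lamq : ι → α → Finset α → Finset α → ℝ),
    hcIsFlowMethodWith ΦM lamM ∧
      (∀ q, lowIsFlowMethodWith (F q) (P q) (Φq q) (lamq q)) ∧
      TwoStepOf P ΦM Φq Φ0

/-- Null flow for non-relevant directed edges. -/
def NullFlowNonRelevant (P : ι → Finset α) (F : ι → Finset (Finset α))
    (Λ : (ι → Finset α) → (ι → Finset α) → ℝ) : Prop :=
  ∀ K K', prodEdge F K K' → ¬ relevantEdge P F K K' → Λ K K' = 0

/-- Flow proportionality between relevant directed edges. -/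
def FlowProportionality (P : ι → Finset α) (F : ι → Finset (Finset α))
    (Λ : (ι → Finset α) → (ι → Finset α) → ℝ) : Prop :=
  ∀ q : ι, ∀ Kq K'q Lq L'q : Finset α,
    coverEdge (F q) Kq K'q → coverEdge (F q) Lq L'q →
    ∀ S S' : Finset ι, q ∈ S → q ∈ S' →
      Λ (profileSK P S q Kq) (profileSK P S q K'q)
          * Λ (profileSK P S' q Lq) (profileSK P S' q L'q)
        = Λ (profileSK P S' q Kq) (profileSK P S' q K'q)
            * Λ (profileSK P S q Lq) (profileSK P S q L'q)

/-- A two-step flow on the product digraph: decomposable as the product of a unitary flow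
on the hypercube and unitary flows on the digraphs `Γ_{F_q}`. -/
def IsTwoStepFlow (P : ι → Finset α) (F : ι → Finset (Finset α))
    (Λ : (ι → Finset α) → (ι → Finset α) → ℝ) : Prop :=
  ∃ (ΛM : Finset ι → Finset ι → ℝ) (Λq : ι → Finset α → Finset α → ℝ),
    hcIsUnitaryFlow ΛM ∧ (∀ q, lowIsUnitaryFlow (F q) (P q) (Λq q)) ∧
      (∀ (S : Finset ι) (q : ι), q ∈ S → ∀ Kq K'q : Finset α,
        coverEdge (F q) Kq K'q →
          Λ (profileSK P S q Kq) (profileSK P S q K'q)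
            = ΛM (S.erase q) S * Λq q Kq K'q) ∧
      ∀ K K', prodEdge F K K' → ¬ relevantEdge P F K K' → Λ K K' = 0

/-- The union `u(K)` of the coalitions of a profile. -/
def unionP (K : ι → Finset α) : Finset α :=
  Finset.univ.biUnion K

/-- The set `F^0` of reachable coalitions. -/
noncomputable def ReachableSet (F : ι → Finset (Finset α)) : Finset (Finset α) :=
  Finset.univ.filter fun R => ∃ K : ι → Finset α, Feasible F K ∧ unionP K = R

/-- Edge of the digraph `Γ*_{F^0}` of reachable coalitions. -/
def starEdge (F : ι → Finset (Finset α)) (R R' : Finset α) : Prop :=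
  R ≠ R' ∧ ∃ K K' : ι → Finset α, prodEdge F K K' ∧ unionP K = R ∧ unionP K' = R'

/-- Marginalist value on games with restricted cooperation `(N, v, F⁰, P)`, relative to an
edge relation `E0` on coalitions. -/
def setMarginalistWith (E0 : Finset α → Finset α → Prop)
    (φ : (Finset α → ℝ) → α → ℝ) (lam : α → Finset α → Finset α → ℝ) : Prop :=
  ∀ v : Finset α → ℝ, v ∅ = 0 → ∀ i : α,
    φ v i = ∑ R : Finset α, ∑ R' : Finset α,
      if E0 R R' ∧ i ∈ R' \ R then lam i R R' * (v R' - v R) else 0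

/-- Flow conservation on the digraph `(F0, E0)` with source `∅` and sink `N = univ`. -/
def setIsFlow (F0 : Finset (Finset α)) (E0 : Finset α → Finset α → Prop)
    (Λ : Finset α → Finset α → ℝ) : Prop :=
  ∀ R ∈ F0, R ≠ ∅ → R ≠ Finset.univ →
    (∑ R' : Finset α, if E0 R' R then Λ R' R else 0)
      = ∑ R' : Finset α, if E0 R R' then Λ R R' else 0

/-- Value of a flow on the digraph `(F0, E0)`. -/
noncomputable def setFlowValue (E0 : Finset α → Finset α → Prop)
    (Λ : Finset α → Finset α → ℝ) : ℝ :=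
  ∑ R' : Finset α, if E0 ∅ R' then Λ ∅ R' else 0

/-- Flow method on games with restricted cooperation relative to `(F0, E0)`. -/
def setIsFlowMethod (F0 : Finset (Finset α)) (E0 : Finset α → Finset α → Prop)
    (φ : (Finset α → ℝ) → α → ℝ) : Prop :=
  ∃ lam : α → Finset α → Finset α → ℝ,
    setMarginalistWith E0 φ lam ∧
      setIsFlow F0 E0 (fun R R' => ∑ i ∈ R' \ R, lam i R R') ∧
      setFlowValue E0 (fun R R' => ∑ i ∈ R' \ R, lam i R R') = 1

/-- A regular set system: every maximal path of its covering digraph has length `|P_q|`. -/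
def RegularSystem (Fq : Finset (Finset α)) (Pq : Finset α) : Prop :=
  ∀ (k : ℕ) (c : ℕ → Finset α), c 0 = ∅ → c k = Pq →
    (∀ j < k, coverEdge Fq (c j) (c (j + 1))) → k = Pq.card


variable {α ι : Type*} [Fintype α] [DecidableEq α] [Fintype ι] [DecidableEq ι]

/-- **Lemma (lem:cc).** If a value satisfies the Null agent axiom and `C` is a component of
the subdigraph `Γ_F^i` not containing the empty profile `∅_M`, then
`Φ_i (∑_{K ∈ C} 1_K) = 0`. -/
theorem value_componentDiracSum_eq_zero
    (P : ι → Finset α) (F : ι → Finset (Finset α)) (hconf : IsGCC P F)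
    (Φ : ((ι → Finset α) → ℝ) → α → ℝ) (hΦ : NullAgentAxiom F Φ)
    (i : α) (C : Finset (ι → Finset α)) (hC : IsComponent F i C)
    (h0 : emptyProfile ∉ C) :
    Φ (fun K' => ∑ K ∈ C, if K' = K then (1 : ℝ) else 0) i = 0 := by
  have hv : ∀ K', (∑ K ∈ C, if K' = K then (1 : ℝ) else 0)
      = if K' ∈ C then (1 : ℝ) else 0 := by
    intro K'
    simp [Finset.sum_ite_eq]
  have hmem : ∀ K K', agentEdge F i K K' → (K ∈ C ↔ K' ∈ C) := by
    intro K K' hE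
    have hadd : ∀ L L', symmEdge F i L L' → L ∈ C → L' ∈ C := by
      intro L L' hstep hL
      by_contra hL'
      have hmax := hC.2.2 (insert L' C) (Finset.subset_insert _ _)
        (by
          intro M hM
          rcases Finset.mem_insert.mp hM with h | h
          · exact ⟨L, h ▸ (Or.elim hstep (fun a => Or.inr a) (fun a => Or.inl a))⟩
          · exact hC.1 M h)
        (by
          intro M hM M' hM'
          have reach : ∀ X ∈ insert L' C, Relation.ReflTransGen (symmEdge F i) L X := by
            intro X hX
            rcases Finset.mem_insert.mp hX with h | h
            · exact h ▸ Relation.ReflTransGen.single hstep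
            · exact hC.2.1 L hL X h
          have reach' : ∀ X ∈ insert L' C, Relation.ReflTransGen (symmEdge F i) X L := by
            intro X hX
            rcases Finset.mem_insert.mp hX with h | h
            · refine h ▸ Relation.ReflTransGen.single ?_
              exact Or.elim hstep (fun a => Or.inr a) (fun a => Or.inl a)
            · exact hC.2.1 X h L hL
          exact (reach' M hM).trans (reach M' hM'))
      exact hL' (hmax ▸ Finset.mem_insert_self L' C)
    exact ⟨hadd K K' (Or.inl hE), hadd K' K (Or.inr hE)⟩
  apply hΦ _ (by simp [hv, emptyProfile, h0]) i
  intro K K' hE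
  have key : (if K ∈ C then (1:ℝ) else 0) = if K' ∈ C then (1:ℝ) else 0 := by
    by_cases hK : K ∈ C
    · rw [if_pos hK, if_pos ((hmem K K' hE).mp hK)]
    · rw [if_neg hK, if_neg (fun h => hK ((hmem K K' hE).mpr h))]
  simpa only [hv] using key
end GCC
end

section
/- Let i ∈ N and suppose the subdigraph Γ_F^i has a component C_{∅_M} containing the empty profile ∅_M. For each q ∈ M let D^i_q = {K ∈ F_q : (∅, K) ∈ E_{F_q} and i ∈ K} ∪ {∅}, and let D^i = ∏_{q∈M} D^i_q. Then C_{∅_M} = D^i. -/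
open scoped Classical
open Finset

/-! `D^i` contains `∅_M` and is closed under the edges of `Γ_F^i` in both directions: an edge
bringing `i` into coordinate `q` must start from `K_q = ∅`, and an edge taking `i` out of `K_q`
starts from a cover of `∅`, hence ends at `∅`. Conversely, every profile in `D^i` is joined to
`∅_M` by emptying its coordinates one at a time, so maximality of the component puts it in `C`. -/

namespace GCC

variable {α ι : Type*}

section

variable {F : ι → Finset (Finset α)} {i : α}

/-- The product `D^i = ∏_q D^i_q` of the paper. -/
def IsFirstStepProfile (F : ι → Finset (Finset α)) (i : α) (K : ι → Finset α) : Prop :=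
  ∀ q, K q = ∅ ∨ (coverEdge (F q) ∅ (K q) ∧ i ∈ K q)

lemma IsFirstStepProfile.feasible (hemp : Feasible F emptyProfile) {K : ι → Finset α}
    (hK : IsFirstStepProfile F i K) : Feasible F K := fun q =>
  (hK q).elim (fun h => h ▸ hemp q) fun h => h.1.2.1

lemma IsFirstStepProfile.update_empty [DecidableEq ι] {K : ι → Finset α}
    (hK : IsFirstStepProfile F i K) (q : ι) :
    IsFirstStepProfile F i (Function.update K q ∅) := by
  intro r
  by_cases hr : r = q
  · subst hr
    simp
  · rw [Function.update_of_ne hr]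
    exact hK r

variable [DecidableEq α] [Fintype ι]

instance : Std.Symm (symmEdge F i) := ⟨fun _ _ h => h.symm⟩

lemma mem_sdiff_of_mem_Qset {K K' : ι → Finset α} {q : ι}
    (hagree : ∀ r, r ≠ q → K' r = K r) (hi : i ∈ Qset K K') : i ∈ K' q \ K q := by
  obtain ⟨r, -, hr⟩ := Finset.mem_biUnion.1 hi
  by_cases h : r = q
  · exact h ▸ hr
  · simp [hagree r h] at hr

lemma IsComponent.feasible {C : Finset (ι → Finset α)} (hC : IsComponent F i C)
    {K : ι → Finset α} (hK : K ∈ C) : Feasible F K := by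
  obtain ⟨K', ⟨⟨hfeas, -⟩, -⟩ | ⟨⟨-, hfeas, -⟩, -⟩⟩ := hC.1 K hK <;> exact hfeas

lemma IsComponent.mem_of_reflTransGen {C : Finset (ι → Finset α)} (hC : IsComponent F i C)
    {K₀ K : ι → Finset α} (hK₀ : K₀ ∈ C) (hedge : ∃ K', symmEdge F i K K')
    (hpath : Relation.ReflTransGen (symmEdge F i) K₀ K) : K ∈ C := by
  have hfrom : ∀ L ∈ insert K C, Relation.ReflTransGen (symmEdge F i) K₀ L := by
    intro L hL
    rcases Finset.mem_insert.1 hL with rfl | hL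
    exacts [hpath, hC.2.1 K₀ hK₀ L hL]
  have hC' : insert K C = C := by
    refine hC.2.2 _ (Finset.subset_insert K C) ?_ ?_
    · intro L hL
      rcases Finset.mem_insert.1 hL with rfl | hL
      exacts [hedge, hC.1 L hL]
    · exact fun L hL L' hL' => (symm (hfrom L hL)).trans (hfrom L' hL')
  exact hC' ▸ Finset.mem_insert_self K C

lemma IsFirstStepProfile.of_symmEdge {K K' : ι → Finset α} (hK : IsFirstStepProfile F i K)
    (h : symmEdge F i K K') : IsFirstStepProfile F i K' := by
  rcases h with ⟨⟨-, -, q, hcov, hagree⟩, hi⟩ | ⟨⟨-, -, q, hcov, hagree⟩, hi⟩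
  · have hiq := Finset.mem_sdiff.1 (mem_sdiff_of_mem_Qset hagree hi)
    have hKq : K q = ∅ := (hK q).resolve_right fun h => hiq.2 h.2
    intro r
    by_cases hr : r = q
    · subst hr
      exact Or.inr ⟨hKq ▸ hcov, hiq.1⟩
    · rw [hagree r hr]
      exact hK r
  · have hKq : coverEdge (F q) ∅ (K q) ∧ i ∈ K q :=
      (hK q).resolve_left fun h => Finset.not_ssubset_empty _ (h ▸ hcov.2.2.1)
    intro r
    by_cases hr : r = q
    · subst hr
      exact Or.inl (hKq.1.2.2.2 _ hcov.1 (Finset.empty_subset _) hcov.2.2.1)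
    · rw [← hagree r hr]
      exact hK r

lemma IsFirstStepProfile.of_reflTransGen {K K' : ι → Finset α}
    (hK : IsFirstStepProfile F i K) (h : Relation.ReflTransGen (symmEdge F i) K K') :
    IsFirstStepProfile F i K' := by
  induction h with
  | refl => exact hK
  | tail _ hstep ih => exact ih.of_symmEdge hstep

variable [DecidableEq ι]

lemma IsFirstStepProfile.agentEdge_update (hemp : Feasible F emptyProfile) {K : ι → Finset α}
    (hK : IsFirstStepProfile F i K) {q : ι} (hq : K q ≠ ∅) :
    agentEdge F i (Function.update K q ∅) K := by
  obtain ⟨hcov, hi⟩ := (hK q).resolve_left hq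
  refine ⟨⟨(hK.update_empty q).feasible hemp, hK.feasible hemp, q, ?_,
    fun r hr => (Function.update_of_ne hr _ _).symm⟩, ?_⟩
  · rwa [Function.update_self]
  · exact Finset.mem_biUnion.2 ⟨q, Finset.mem_univ q, by simpa using hi⟩

lemma IsFirstStepProfile.reflTransGen_emptyProfile (hemp : Feasible F emptyProfile)
    {K : ι → Finset α} (hK : IsFirstStepProfile F i K) :
    Relation.ReflTransGen (symmEdge F i) emptyProfile K := by
  induction hn : (support K).card generalizing K with
  | zero =>
    have hK0 : ∀ q, K q = ∅ := by simpa [support] using Finset.card_eq_zero.1 hn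
    obtain rfl : K = emptyProfile := funext hK0
    exact .refl
  | succ n ih =>
    obtain ⟨q, hq⟩ := (Finset.card_pos (s := support K)).1 (by omega)
    have hsupp : support (Function.update K q ∅) = (support K).erase q := by
      ext r
      by_cases hr : r = q <;> simp [support, hr]
    have hpath := ih (hK.update_empty q) (by rw [hsupp, Finset.card_erase_of_mem hq, hn]; rfl)
    exact hpath.tail (Or.inl (hK.agentEdge_update hemp (Finset.mem_filter.1 hq).2))

end

variable {α ι : Type*} [Fintype α] [DecidableEq α] [Fintype ι] [DecidableEq ι]

theorem component_of_emptyProfile_eq_prod_general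
    (F : ι → Finset (Finset α))
    (i : α) (C : Finset (ι → Finset α)) (hC : IsComponent F i C)
    (h0 : emptyProfile ∈ C) :
    ∀ K : ι → Finset α,
      K ∈ C ↔ ∀ q : ι, K q = ∅ ∨ (coverEdge (F q) ∅ (K q) ∧ i ∈ K q) := by
  have hemp : Feasible F emptyProfile := hC.feasible h0
  have hD₀ : IsFirstStepProfile F i emptyProfile := fun _ => Or.inl rfl
  intro K
  refine ⟨fun hK => hD₀.of_reflTransGen (hC.2.1 _ h0 K hK), fun hK => ?_⟩
  change IsFirstStepProfile F i K at hK
  refine hC.mem_of_reflTransGen h0 ?_ (hK.reflTransGen_emptyProfile hemp)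
  by_cases hKe : K = emptyProfile
  · exact hKe ▸ hC.1 _ h0
  · obtain ⟨q, hq⟩ := Function.ne_iff.1 hKe
    exact ⟨_, Or.inr (hK.agentEdge_update hemp hq)⟩

/-- **Lemma (lem:S_emptyset).** The component of `Γ_F^i` containing the empty profile
`∅_M` is exactly the cartesian product `D^i` of the sets
`D^i_q = {K ∈ F_q : (∅, K) ∈ E_{F_q}, i ∈ K} ∪ {∅}`. -/
theorem component_of_emptyProfile_eq_prod
    (P : ι → Finset α) (F : ι → Finset (Finset α)) (hconf : IsGCC P F)
    (i : α) (C : Finset (ι → Finset α)) (hC : IsComponent F i C)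
    (h0 : emptyProfile ∈ C) :
    ∀ K : ι → Finset α,
      K ∈ C ↔ ∀ q : ι, K q = ∅ ∨ (coverEdge (F q) ∅ (K q) ∧ i ∈ K q) :=
  component_of_emptyProfile_eq_prod_general F i C hC h0

end GCC
end

section
/- A value Φ on the class of cooperative games with generalized coalition configuration G_{N,P,F} is marginalist (i.e. there exist functions λ_i^Φ : E_F^i → ℝ, i ∈ N, such that Φ_i(v) = Σ_{(K,K')∈E_F^i} λ_i^Φ(K,K') (v(K') − v(K)) for every coalition profile function v and every i ∈ N) if and only if Φ satisfies Linearity and the Null agent axiom. -/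
open scoped Classical
open Finset

namespace GCC

variable {α ι : Type*} [Fintype α] [DecidableEq α] [Fintype ι] [DecidableEq ι]

variable {α ι : Type*} [Fintype α] [DecidableEq α] [Fintype ι] [DecidableEq ι]

/-- **Theorem (th:marg_cov).** A value on `G_{N,P,F}` is marginalist if and only if it
satisfies Linearity and the Null agent axiom. -/
theorem marginalist_iff_linear_and_nullAgent
    (P : ι → Finset α) (F : ι → Finset (Finset α)) (hconf : IsGCC P F)
    (Φ : ((ι → Finset α) → ℝ) → α → ℝ) :
    IsMarginalist F Φ ↔ (Linear Φ ∧ NullAgentAxiom F Φ) := by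
  constructor
  · rintro ⟨lam, hm⟩
    constructor
    · intro v v' hv hv' a i
      have h0 : (fun K => a * v K + v' K) emptyProfile = 0 := by simp [hv, hv']
      rw [hm _ h0 i, hm v hv i, hm v' hv' i, Finset.mul_sum, ← Finset.sum_add_distrib]
      refine Finset.sum_congr rfl fun K _ => ?_
      rw [Finset.mul_sum, ← Finset.sum_add_distrib]
      refine Finset.sum_congr rfl fun K' _ => ?_
      split_ifs with h <;> ring
    · intro v hv i hnull
      rw [hm v hv i]
      refine Finset.sum_eq_zero fun K _ => Finset.sum_eq_zero fun K' _ => ?_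
      split_ifs with h
      · rw [hnull K K' h]; ring
      · rfl
  · rintro ⟨hlin, hnull⟩
    -- Φ of the zero game is zero
    have hΦ0 : ∀ i : α, Φ (fun _ => 0) i = 0 := by
      intro i
      have h := hlin (fun _ => 0) (fun _ => 0) rfl rfl 1 i
      simp only [mul_zero, add_zero, one_mul, zero_add] at h
      linarith
    -- the subspace of games vanishing at the empty profile
    set V : Submodule ℝ ((ι → Finset α) → ℝ) :=
      LinearMap.ker (LinearMap.proj (R := ℝ) (φ := fun _ : ι → Finset α => ℝ) emptyProfile)
      with hV
    have hmemV : ∀ v : (ι → Finset α) → ℝ, v ∈ V ↔ v emptyProfile = 0 := by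
      intro v; rw [hV, LinearMap.mem_ker, LinearMap.proj_apply]
    have key : ∀ i : α, ∃ c : ((ι → Finset α) × (ι → Finset α)) → ℝ,
        ∀ v : (ι → Finset α) → ℝ, v emptyProfile = 0 →
          Φ v i = ∑ e : ((ι → Finset α) × (ι → Finset α)),
            c e * (if agentEdge F i e.1 e.2 then v e.2 - v e.1 else 0) := by
      intro i
      -- Φ restricted to V, as a linear functional
      let Φi : V →ₗ[ℝ] ℝ :=
        { toFun := fun v => Φ v.1 i
          map_add' := by
            intro v w
            have hvw : ((v + w : V) : (ι → Finset α) → ℝ)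
                = fun K => (1 : ℝ) * v.1 K + w.1 K := by
              funext K; simp
            have := hlin v.1 w.1 ((hmemV _).1 v.2) ((hmemV _).1 w.2) 1 i
            simp only [one_mul] at this ⊢
            rw [hvw]
            simpa using this
          map_smul' := by
            intro a v
            have hav : ((a • v : V) : (ι → Finset α) → ℝ)
                = fun K => a * v.1 K + (0 : ℝ) := by
              funext K; simp
            have h5 := hlin v.1 (fun _ => 0) ((hmemV _).1 v.2) rfl a i
            rw [hΦ0 i, add_zero] at h5
            simp only [RingHom.id_apply, smul_eq_mul]
            rw [hav]; exact h5 }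
      -- the difference functionals along agent edges
      let D : ((ι → Finset α) × (ι → Finset α)) → (V →ₗ[ℝ] ℝ) := fun e =>
        { toFun := fun v => if agentEdge F i e.1 e.2 then v.1 e.2 - v.1 e.1 else 0
          map_add' := by intro v w; split_ifs <;> simp <;> ring
          map_smul' := by intro a v; split_ifs <;> simp <;> ring }
      have hker : ⨅ e, LinearMap.ker (D e) ≤ LinearMap.ker Φi := by
        intro v hv
        simp only [Submodule.mem_iInf, LinearMap.mem_ker] at hv ⊢
        refine hnull v.1 ((hmemV _).1 v.2) i ?_
        intro K K' h
        have h2 := hv (K, K')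
        simp only [D, LinearMap.coe_mk, AddHom.coe_mk, if_pos h] at h2
        linarith
      obtain ⟨c, hc⟩ := (Submodule.mem_span_range_iff_exists_fun ℝ).1
        (mem_span_of_iInf_ker_le_ker hker)
      refine ⟨c, fun v hv => ?_⟩
      have hvV : v ∈ V := (hmemV _).2 hv
      have h3 := LinearMap.congr_fun hc (⟨v, hvV⟩ : V)
      simp only [LinearMap.coe_sum, Finset.sum_apply, LinearMap.smul_apply,
        smul_eq_mul] at h3
      rw [show Φ v i = Φi (⟨v, hvV⟩ : V) from rfl, ← h3]
      rfl
    choose c hc using key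
    refine ⟨fun i K K' => c i (K, K'), fun v hv i => ?_⟩
    rw [hc i v hv, Fintype.sum_prod_type]
    exact Finset.sum_congr rfl fun K _ => Finset.sum_congr rfl fun K' _ => by
      split_ifs <;> simp
end GCC
end

section
/- Assume that for every directed edge (K,K') of the product digraph Γ_F, either u(K) = u(K'), or u(K') ∖ u(K) = K'_q ∖ K_q where q = q_{(K,K')} is the unique index at which K and K' differ. Then for any flow method Φ on G_{N,F,P}, the induced value φ ◁ Φ is a flow method on G_{N,F^0,P} whose associated flow passes through the directed edges of Γ*_{F^0}. -/
open scoped Classical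
open Finset

namespace GCC

variable {α ι : Type*} [Fintype α] [DecidableEq α] [Fintype ι] [DecidableEq ι]

variable {α ι : Type*} [Fintype α] [DecidableEq α] [Fintype ι] [DecidableEq ι]

private lemma unionP_emptyProfile : unionP (emptyProfile : ι → Finset α) = ∅ := by
  ext i
  simp [unionP, emptyProfile]

private lemma eq_emptyProfile_of_unionP {K : ι → Finset α} (h : unionP K = ∅) :
    K = emptyProfile := by
  funext q
  have hsub : K q ⊆ unionP K := fun i hi => Finset.mem_biUnion.2 ⟨q, Finset.mem_univ q, hi⟩
  rw [h] at hsub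
  simpa [emptyProfile] using Finset.subset_empty.1 hsub

private lemma Qset_eq_single {K K' : ι → Finset α} {q : ι}
    (h : ∀ r, r ≠ q → K' r = K r) : Qset K K' = K' q \ K q := by
  ext i
  simp only [Qset, Finset.mem_biUnion, Finset.mem_univ, true_and]
  constructor
  · rintro ⟨r, hr⟩
    by_cases hrq : r = q
    · exact hrq ▸ hr
    · rw [h r hrq] at hr
      simp at hr
  · exact fun hi => ⟨q, hi⟩

private lemma sum_collapse {β : Type*} [Fintype β] (a : β) (p : β → Prop) (g : β → ℝ)
    [∀ b, Decidable (a = b ∧ p b)] [Decidable (p a)] :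
    (∑ b : β, if a = b ∧ p b then g b else 0) = if p a then g a else 0 := by
  rw [Finset.sum_eq_single a]
  · by_cases h : p a
    · rw [if_pos ⟨rfl, h⟩, if_pos h]
    · rw [if_neg, if_neg h]
      rintro ⟨-, h2⟩; exact h h2
  · intro b _ hb
    rw [if_neg]
    rintro ⟨h1, -⟩; exact hb h1.symm
  · intro h; exact absurd (Finset.mem_univ a) h

private lemma sum_collapse2 {β : Type*} [Fintype β] (a b : β) (p : β → β → Prop)
    (g : β → β → ℝ) [∀ x y, Decidable (a = x ∧ b = y ∧ p x y)] [Decidable (p a b)] :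
    (∑ x : β, ∑ y : β, if a = x ∧ b = y ∧ p x y then g x y else 0)
      = if p a b then g a b else 0 := by
  rw [Finset.sum_eq_single a]
  · rw [Finset.sum_eq_single b]
    · by_cases h : p a b
      · rw [if_pos ⟨rfl, rfl, h⟩, if_pos h]
      · rw [if_neg (fun hc => h hc.2.2), if_neg h]
    · intro y _ hy
      rw [if_neg (fun hc => hy hc.2.1.symm)]
    · intro h; exact absurd (Finset.mem_univ b) h
  · intro x _ hx
    refine Finset.sum_eq_zero fun y _ => ?_
    rw [if_neg (fun hc => hx hc.1.symm)]
  · intro h; exact absurd (Finset.mem_univ a) h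

private lemma sum_if_iff {β : Type*} [Fintype β] {p q : β → Prop} [DecidablePred p]
    [DecidablePred q] (h : ∀ b, p b ↔ q b) (g : β → ℝ) :
    (∑ b : β, if p b then g b else 0) = ∑ b : β, if q b then g b else 0 :=
  Finset.sum_congr rfl fun b _ => if_congr (h b) rfl rfl

private lemma sum_if_iff2 {β γ : Type*} [Fintype β] [Fintype γ] {p q : β → γ → Prop}
    [∀ x y, Decidable (p x y)] [∀ x y, Decidable (q x y)]
    (h : ∀ x y, p x y ↔ q x y) (g : β → γ → ℝ) :
    (∑ x : β, ∑ y : γ, if p x y then g x y else 0)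
      = ∑ x : β, ∑ y : γ, if q x y then g x y else 0 :=
  Finset.sum_congr rfl fun x _ => Finset.sum_congr rfl fun y _ => if_congr (h x y) rfl rfl

private lemma sum_swap3 {β γ : Type*} [Fintype β] [Fintype γ]
    (g : β → γ → γ → ℝ) :
    (∑ a : β, ∑ x : γ, ∑ y : γ, g a x y)
      = ∑ x : γ, ∑ y : γ, ∑ a : β, g a x y := by
  calc (∑ a : β, ∑ x : γ, ∑ y : γ, g a x y)
      = ∑ x : γ, ∑ a : β, ∑ y : γ, g a x y := Finset.sum_comm
    _ = ∑ x : γ, ∑ y : γ, ∑ a : β, g a x y :=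
        Finset.sum_congr rfl fun x _ => Finset.sum_comm

private lemma sum_swap4 {β γ : Type*} [Fintype β] [Fintype γ]
    (g : β → β → γ → γ → ℝ) :
    (∑ a : β, ∑ b : β, ∑ x : γ, ∑ y : γ, g a b x y)
      = ∑ x : γ, ∑ y : γ, ∑ a : β, ∑ b : β, g a b x y := by
  calc (∑ a : β, ∑ b : β, ∑ x : γ, ∑ y : γ, g a b x y)
      = ∑ a : β, ∑ x : γ, ∑ b : β, ∑ y : γ, g a b x y :=
        Finset.sum_congr rfl fun a _ => Finset.sum_comm
    _ = ∑ x : γ, ∑ a : β, ∑ b : β, ∑ y : γ, g a b x y := Finset.sum_comm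
    _ = ∑ x : γ, ∑ a : β, ∑ y : γ, ∑ b : β, g a b x y :=
        Finset.sum_congr rfl fun x _ => Finset.sum_congr rfl fun a _ => Finset.sum_comm
    _ = ∑ x : γ, ∑ y : γ, ∑ a : β, ∑ b : β, g a b x y :=
        Finset.sum_congr rfl fun x _ => Finset.sum_comm

/-- **Theorem (final).** Assume that along every directed edge `(K,K')` of the product
digraph, either `u(K) = u(K')` or `u(K') ∖ u(K) = K'_q ∖ K_q` for the unique differing
coordinate `q`. Then for any flow method `Φ` on `G_{N,F,P}`, the induced value `φ ◁ Φ`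
(given by `φ(v) = Φ(v ∘ u)`) is a flow method on `G_{N,F⁰,P}` whose associated flow
passes through the directed edges of `Γ*_{F⁰}`. -/
theorem induced_flowMethod_on_reachable_star
    (P : ι → Finset α) (F : ι → Finset (Finset α)) (hconf : IsGCC P F)
    (hcond : ∀ (K K' : ι → Finset α) (q : ι), prodEdge F K K' →
      coverEdge (F q) (K q) (K' q) → (∀ r, r ≠ q → K' r = K r) →
      unionP K = unionP K' ∨ unionP K' \ unionP K = K' q \ K q)
    (Φ : ((ι → Finset α) → ℝ) → α → ℝ) (hΦ : IsFlowMethod P F Φ) :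
    setIsFlowMethod (ReachableSet F) (starEdge F)
      (fun v : Finset α → ℝ => Φ fun K => v (unionP K)) := by
  classical
  obtain ⟨lam, hmar, hflow, hval⟩ := hΦ
  have hPuniv : unionP P = Finset.univ := by
    ext i
    simp only [unionP, Finset.mem_biUnion, Finset.mem_univ, true_and, iff_true]
    exact hconf.2.1 i
  have qdiff : ∀ K K' : ι → Finset α, prodEdge F K K' → unionP K ≠ unionP K' →
      Qset K K' = unionP K' \ unionP K := by
    intro K K' hE hne
    obtain ⟨hK, hK', q, hcov, hoth⟩ := hE
    rcases hcond K K' q ⟨hK, hK', q, hcov, hoth⟩ hcov hoth with h | h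
    · exact absurd h hne
    · rw [Qset_eq_single hoth, ← h]
  have hne0 : ∀ K' : ι → Finset α, prodEdge F emptyProfile K' → unionP K' ≠ ∅ := by
    intro K' hE
    obtain ⟨-, -, q, hcov, -⟩ := hE
    have hnonempty : (K' q).Nonempty := by
      rcases Finset.eq_empty_or_nonempty (K' q) with h | h
      · exfalso
        have hss := hcov.2.2.1
        rw [h] at hss
        exact (Finset.not_ssubset_empty _) hss
      · exact h
    obtain ⟨j, hj⟩ := hnonempty
    intro hc
    have hmem : j ∈ unionP K' := Finset.mem_biUnion.2 ⟨q, Finset.mem_univ q, hj⟩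
    rw [hc] at hmem
    simp at hmem
  set lam0 : α → Finset α → Finset α → ℝ := fun i R R' =>
    ∑ K : ι → Finset α, ∑ K' : ι → Finset α,
      if agentEdge F i K K' ∧ unionP K = R ∧ unionP K' = R' then lam i K K' else 0
    with hlam0
  -- The induced edge flow on `Γ*_{F⁰}` aggregates the product-digraph flow.
  have hLam : ∀ R R' : Finset α, R ≠ R' →
      (∑ j ∈ R' \ R, lam0 j R R')
        = ∑ K : ι → Finset α, ∑ K' : ι → Finset α,
            if prodEdge F K K' ∧ unionP K = R ∧ unionP K' = R'
              then edgeFlow lam K K' else 0 := by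
    intro R R' hne
    simp only [hlam0]
    rw [Finset.sum_comm]
    refine Finset.sum_congr rfl fun K _ => ?_
    rw [Finset.sum_comm]
    refine Finset.sum_congr rfl fun K' _ => ?_
    by_cases h : prodEdge F K K' ∧ unionP K = R ∧ unionP K' = R'
    · have hneu : unionP K ≠ unionP K' := by
        rw [h.2.1, h.2.2]; exact hne
      have hQ : Qset K K' = R' \ R := by
        rw [qdiff K K' h.1 hneu, h.2.1, h.2.2]
      rw [if_pos h, show edgeFlow lam K K' = ∑ j ∈ Qset K K', lam j K K' from rfl, hQ]
      refine Finset.sum_congr rfl fun j hj => ?_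
      exact if_pos ⟨⟨h.1, by rw [hQ]; exact hj⟩, h.2⟩
    · rw [if_neg h]
      refine Finset.sum_eq_zero fun j _ => ?_
      exact if_neg fun hc => h ⟨hc.1.1, hc.2⟩
  -- total induced flow out of a coalition `R`
  have hout : ∀ R : Finset α,
      (∑ R' : Finset α, if starEdge F R R' then (∑ j ∈ R' \ R, lam0 j R R') else 0)
        = ∑ K : ι → Finset α, ∑ K' : ι → Finset α,
            if prodEdge F K K' ∧ unionP K = R ∧ unionP K' ≠ R
              then edgeFlow lam K K' else 0 := by
    intro R
    calc (∑ R' : Finset α, if starEdge F R R' then (∑ j ∈ R' \ R, lam0 j R R') else 0)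
        = ∑ R' : Finset α, ∑ K : ι → Finset α, ∑ K' : ι → Finset α,
            if starEdge F R R' ∧ (prodEdge F K K' ∧ unionP K = R ∧ unionP K' = R')
              then edgeFlow lam K K' else 0 := by
          refine Finset.sum_congr rfl fun R' _ => ?_
          by_cases hs : starEdge F R R'
          · rw [if_pos hs, hLam R R' hs.1]
            refine Finset.sum_congr rfl fun K _ => Finset.sum_congr rfl fun K' _ => ?_
            by_cases h2 : prodEdge F K K' ∧ unionP K = R ∧ unionP K' = R'
            · rw [if_pos h2, if_pos ⟨hs, h2⟩]
            · rw [if_neg h2, if_neg fun hc => h2 hc.2]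
          · rw [if_neg hs]
            refine (Finset.sum_eq_zero fun K _ => Finset.sum_eq_zero fun K' _ => ?_).symm
            exact if_neg fun hc => hs hc.1
      _ = ∑ K : ι → Finset α, ∑ K' : ι → Finset α, ∑ R' : Finset α,
            if starEdge F R R' ∧ (prodEdge F K K' ∧ unionP K = R ∧ unionP K' = R')
              then edgeFlow lam K K' else 0 := sum_swap3 _
      _ = ∑ K : ι → Finset α, ∑ K' : ι → Finset α,
            if prodEdge F K K' ∧ unionP K = R ∧ unionP K' ≠ R
              then edgeFlow lam K K' else 0 := by
          refine Finset.sum_congr rfl fun K _ => Finset.sum_congr rfl fun K' _ => ?_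
          rw [sum_if_iff (q := fun R' => unionP K' = R' ∧
                (starEdge F R R' ∧ prodEdge F K K' ∧ unionP K = R))
              (fun R' => by tauto) _, sum_collapse]
          by_cases h : prodEdge F K K' ∧ unionP K = R ∧ unionP K' ≠ R
          · rw [if_pos h, if_pos]
            exact ⟨⟨fun he => h.2.2 he.symm, K, K', h.1, h.2.1, rfl⟩, h.1, h.2.1⟩
          · rw [if_neg h, if_neg]
            rintro ⟨hs, hp, hu⟩
            exact h ⟨hp, hu, fun he => hs.1 he.symm⟩
  -- total induced flow into a coalition `R`
  have hin : ∀ R : Finset α,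
      (∑ R' : Finset α, if starEdge F R' R then (∑ j ∈ R \ R', lam0 j R' R) else 0)
        = ∑ K : ι → Finset α, ∑ K' : ι → Finset α,
            if prodEdge F K K' ∧ unionP K' = R ∧ unionP K ≠ R
              then edgeFlow lam K K' else 0 := by
    intro R
    calc (∑ R' : Finset α, if starEdge F R' R then (∑ j ∈ R \ R', lam0 j R' R) else 0)
        = ∑ R' : Finset α, ∑ K : ι → Finset α, ∑ K' : ι → Finset α,
            if starEdge F R' R ∧ (prodEdge F K K' ∧ unionP K = R' ∧ unionP K' = R)
              then edgeFlow lam K K' else 0 := by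
          refine Finset.sum_congr rfl fun R' _ => ?_
          by_cases hs : starEdge F R' R
          · rw [if_pos hs, hLam R' R hs.1]
            refine Finset.sum_congr rfl fun K _ => Finset.sum_congr rfl fun K' _ => ?_
            by_cases h2 : prodEdge F K K' ∧ unionP K = R' ∧ unionP K' = R
            · rw [if_pos h2, if_pos ⟨hs, h2⟩]
            · rw [if_neg h2, if_neg fun hc => h2 hc.2]
          · rw [if_neg hs]
            refine (Finset.sum_eq_zero fun K _ => Finset.sum_eq_zero fun K' _ => ?_).symm
            exact if_neg fun hc => hs hc.1
      _ = ∑ K : ι → Finset α, ∑ K' : ι → Finset α, ∑ R' : Finset α,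
            if starEdge F R' R ∧ (prodEdge F K K' ∧ unionP K = R' ∧ unionP K' = R)
              then edgeFlow lam K K' else 0 := sum_swap3 _
      _ = ∑ K : ι → Finset α, ∑ K' : ι → Finset α,
            if prodEdge F K K' ∧ unionP K' = R ∧ unionP K ≠ R
              then edgeFlow lam K K' else 0 := by
          refine Finset.sum_congr rfl fun K _ => Finset.sum_congr rfl fun K' _ => ?_
          rw [sum_if_iff (q := fun R' => unionP K = R' ∧
                (starEdge F R' R ∧ prodEdge F K K' ∧ unionP K' = R))
              (fun R' => by tauto) _, sum_collapse]
          by_cases h : prodEdge F K K' ∧ unionP K' = R ∧ unionP K ≠ R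
          · rw [if_pos h, if_pos]
            exact ⟨⟨h.2.2, K, K', h.1, rfl, h.2.1⟩, h.1, h.2.1⟩
          · rw [if_neg h, if_neg]
            rintro ⟨hs, hp, hu⟩
            exact h ⟨hp, hu, hs.1⟩
  refine ⟨lam0, ?_, ?_, ?_⟩
  · -- marginalism of the induced value
    intro v hv i
    have h0 : (fun K : ι → Finset α => v (unionP K)) emptyProfile = 0 := by
      show v (unionP (emptyProfile : ι → Finset α)) = 0
      rw [unionP_emptyProfile]; exact hv
    have step1 : ∀ R R' : Finset α,
        (if starEdge F R R' ∧ i ∈ R' \ R then lam0 i R R' * (v R' - v R) else 0)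
          = ∑ K : ι → Finset α, ∑ K' : ι → Finset α,
              if (starEdge F R R' ∧ i ∈ R' \ R) ∧ agentEdge F i K K' ∧
                  unionP K = R ∧ unionP K' = R'
                then lam i K K' * (v R' - v R) else 0 := by
      intro R R'
      by_cases h : starEdge F R R' ∧ i ∈ R' \ R
      · rw [if_pos h]
        simp only [hlam0]
        rw [Finset.sum_mul]
        refine Finset.sum_congr rfl fun K _ => ?_
        rw [Finset.sum_mul]
        refine Finset.sum_congr rfl fun K' _ => ?_
        by_cases h2 : agentEdge F i K K' ∧ unionP K = R ∧ unionP K' = R'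
        · rw [if_pos h2, if_pos ⟨h, h2⟩]
        · rw [if_neg h2, zero_mul, if_neg fun hc => h2 hc.2]
      · rw [if_neg h]
        refine (Finset.sum_eq_zero fun K _ => Finset.sum_eq_zero fun K' _ => ?_).symm
        exact if_neg fun hc => h hc.1
    have step2 : ∀ K K' : ι → Finset α,
        (∑ R : Finset α, ∑ R' : Finset α,
            if (starEdge F R R' ∧ i ∈ R' \ R) ∧ agentEdge F i K K' ∧
                unionP K = R ∧ unionP K' = R'
              then lam i K K' * (v R' - v R) else 0)
          = if agentEdge F i K K' then
              lam i K K' * (v (unionP K') - v (unionP K)) else 0 := by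
      intro K K'
      rw [sum_if_iff2 (q := fun R R' => unionP K = R ∧ unionP K' = R' ∧
            ((starEdge F R R' ∧ i ∈ R' \ R) ∧ agentEdge F i K K'))
          (fun R R' => by tauto) _, sum_collapse2]
      by_cases hA : agentEdge F i K K'
      · by_cases hu : unionP K = unionP K'
        · rw [if_neg fun hc => hc.1.1.1 hu, if_pos hA, hu, sub_self, mul_zero]
        · rw [if_pos ⟨⟨⟨hu, K, K', hA.1, rfl, rfl⟩, (qdiff K K' hA.1 hu) ▸ hA.2⟩, hA⟩,
            if_pos hA]
      · rw [if_neg fun hc => hA hc.2, if_neg hA]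
    calc (fun v : Finset α → ℝ => Φ fun K => v (unionP K)) v i
        = ∑ K : ι → Finset α, ∑ K' : ι → Finset α,
            if agentEdge F i K K' then
              lam i K K' * (v (unionP K') - v (unionP K)) else 0 :=
          hmar (fun K => v (unionP K)) h0 i
      _ = ∑ K : ι → Finset α, ∑ K' : ι → Finset α, ∑ R : Finset α, ∑ R' : Finset α,
            if (starEdge F R R' ∧ i ∈ R' \ R) ∧ agentEdge F i K K' ∧
                unionP K = R ∧ unionP K' = R'
              then lam i K K' * (v R' - v R) else 0 :=
          (Finset.sum_congr rfl fun K _ => Finset.sum_congr rfl fun K' _ =>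
            (step2 K K').symm)
      _ = ∑ R : Finset α, ∑ R' : Finset α, ∑ K : ι → Finset α, ∑ K' : ι → Finset α,
            if (starEdge F R R' ∧ i ∈ R' \ R) ∧ agentEdge F i K K' ∧
                unionP K = R ∧ unionP K' = R'
              then lam i K K' * (v R' - v R) else 0 := (sum_swap4 _).symm
      _ = ∑ R : Finset α, ∑ R' : Finset α,
            if starEdge F R R' ∧ i ∈ R' \ R then lam0 i R R' * (v R' - v R) else 0 :=
          (Finset.sum_congr rfl fun R _ => Finset.sum_congr rfl fun R' _ =>
            (step1 R R').symm)
  · -- flow conservation on `Γ*_{F⁰}`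
    intro R hRmem hRne hRuniv
    show (∑ R' : Finset α, if starEdge F R' R then (∑ j ∈ R \ R', lam0 j R' R) else 0)
        = ∑ R' : Finset α, if starEdge F R R' then (∑ j ∈ R' \ R, lam0 j R R') else 0
    rw [hin R, hout R]
    -- expand flow conservation summed over all profiles with union `R`
    have expand : ∀ (e : (ι → Finset α) → (ι → Finset α) → Prop)
        (g : (ι → Finset α) → (ι → Finset α) → ℝ),
        (∑ K : ι → Finset α, if unionP K = R then
            (∑ K' : ι → Finset α, if e K K' then g K K' else 0) else 0)
          = (∑ K : ι → Finset α, ∑ K' : ι → Finset α,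
              if e K K' ∧ unionP K = R ∧ unionP K' = R then g K K' else 0)
            + ∑ K : ι → Finset α, ∑ K' : ι → Finset α,
              if e K K' ∧ unionP K = R ∧ unionP K' ≠ R then g K K' else 0 := by
      intro e g
      rw [← Finset.sum_add_distrib]
      refine Finset.sum_congr rfl fun K _ => ?_
      rw [← Finset.sum_add_distrib]
      by_cases hu : unionP K = R
      · rw [if_pos hu]
        refine Finset.sum_congr rfl fun K' _ => ?_
        by_cases he : e K K'
        · by_cases hu' : unionP K' = R
          · rw [if_pos he, if_pos ⟨he, hu, hu'⟩, if_neg fun hc => hc.2.2 hu', add_zero]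
          · rw [if_pos he, if_neg fun hc => hu' hc.2.2, if_pos ⟨he, hu, hu'⟩, zero_add]
        · rw [if_neg he, if_neg fun hc => he hc.1, if_neg fun hc => he hc.1, add_zero]
      · rw [if_neg hu]
        refine (Finset.sum_eq_zero fun K' _ => ?_).symm
        rw [if_neg fun hc => hu hc.2.1, if_neg fun hc => hu hc.2.1, add_zero]
    have hc : (∑ K : ι → Finset α, if unionP K = R then
          (∑ K' : ι → Finset α, if prodEdge F K' K then edgeFlow lam K' K else 0) else 0)
        = ∑ K : ι → Finset α, if unionP K = R then
          (∑ K' : ι → Finset α, if prodEdge F K K' then edgeFlow lam K K' else 0) else 0 := by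
      refine Finset.sum_congr rfl fun K _ => ?_
      by_cases hu : unionP K = R
      · rw [if_pos hu, if_pos hu]
        by_cases hf : Feasible F K
        · refine hflow K hf ?_ ?_
          · rintro rfl
            exact hRne (hu.symm.trans unionP_emptyProfile)
          · rintro rfl
            exact hRuniv (hu.symm.trans hPuniv)
        · rw [Finset.sum_eq_zero fun K' _ => if_neg fun hc => hf hc.2.1,
            Finset.sum_eq_zero fun K' _ => if_neg fun hc => hf hc.1]
      · rw [if_neg hu, if_neg hu]
    have hc2 : (∑ K : ι → Finset α, ∑ K' : ι → Finset α,
          if prodEdge F K' K ∧ unionP K = R ∧ unionP K' = R then edgeFlow lam K' K else 0)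
        + (∑ K : ι → Finset α, ∑ K' : ι → Finset α,
          if prodEdge F K' K ∧ unionP K = R ∧ unionP K' ≠ R then edgeFlow lam K' K else 0)
        = (∑ K : ι → Finset α, ∑ K' : ι → Finset α,
          if prodEdge F K K' ∧ unionP K = R ∧ unionP K' = R then edgeFlow lam K K' else 0)
        + ∑ K : ι → Finset α, ∑ K' : ι → Finset α,
          if prodEdge F K K' ∧ unionP K = R ∧ unionP K' ≠ R then edgeFlow lam K K' else 0 :=
      (expand (fun K K' => prodEdge F K' K) (fun K K' => edgeFlow lam K' K)).symm.trans
        (hc.trans (expand (fun K K' => prodEdge F K K') (fun K K' => edgeFlow lam K K')))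
    have hB : (∑ K : ι → Finset α, ∑ K' : ι → Finset α,
          if prodEdge F K' K ∧ unionP K = R ∧ unionP K' = R then edgeFlow lam K' K else 0)
        = ∑ K : ι → Finset α, ∑ K' : ι → Finset α,
          if prodEdge F K K' ∧ unionP K = R ∧ unionP K' = R then edgeFlow lam K K' else 0 := by
      rw [Finset.sum_comm]
      exact sum_if_iff2 (fun x y => by tauto) _
    rw [hB] at hc2
    have hA := add_left_cancel hc2
    calc (∑ K : ι → Finset α, ∑ K' : ι → Finset α,
          if prodEdge F K K' ∧ unionP K' = R ∧ unionP K ≠ R then edgeFlow lam K K' else 0)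
        = ∑ K : ι → Finset α, ∑ K' : ι → Finset α,
          if prodEdge F K' K ∧ unionP K = R ∧ unionP K' ≠ R then edgeFlow lam K' K else 0 :=
          Finset.sum_comm
      _ = ∑ K : ι → Finset α, ∑ K' : ι → Finset α,
          if prodEdge F K K' ∧ unionP K = R ∧ unionP K' ≠ R then edgeFlow lam K K' else 0 :=
          hA
  · -- unitarity of the induced flow
    show (∑ R' : Finset α, if starEdge F ∅ R' then (∑ j ∈ R' \ ∅, lam0 j ∅ R') else 0) = 1
    rw [hout ∅]
    calc (∑ K : ι → Finset α, ∑ K' : ι → Finset α,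
          if prodEdge F K K' ∧ unionP K = ∅ ∧ unionP K' ≠ ∅ then edgeFlow lam K K' else 0)
        = ∑ K : ι → Finset α, ∑ K' : ι → Finset α,
            if (emptyProfile : ι → Finset α) = K ∧ prodEdge F K K'
              then edgeFlow lam K K' else 0 := by
          refine sum_if_iff2 (fun K K' => ?_) _
          constructor
          · rintro ⟨hp, hu, -⟩
            exact ⟨(eq_emptyProfile_of_unionP hu).symm, hp⟩
          · rintro ⟨hk, hp⟩
            subst hk
            exact ⟨hp, unionP_emptyProfile, hne0 K' hp⟩
      _ = ∑ K' : ι → Finset α, ∑ K : ι → Finset α,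
            if (emptyProfile : ι → Finset α) = K ∧ prodEdge F K K'
              then edgeFlow lam K K' else 0 := Finset.sum_comm
      _ = ∑ K' : ι → Finset α,
            if prodEdge F emptyProfile K' then edgeFlow lam emptyProfile K' else 0 :=
          Finset.sum_congr rfl fun K' _ =>
            sum_collapse emptyProfile (fun K => prodEdge F K K') (fun K => edgeFlow lam K K')
      _ = 1 := hval
end GCC
end

section
/- Assume that either (1) the coalition configuration P = (P_1,…,P_m) is a partition of N, or (2) each set system (P_q, F_q) is regular, i.e. normal and every maximal path in its covering digraph Γ_{F_q} has length |P_q|. Then for any flow method Φ on G_{N,F,P}, the induced value φ ◁ Φ is a flow method on G_{N,F^0,P} whose associated flow passes through the directed edges of Γ_{F^0}, the covering digraph of the partially ordered set (F^0, ⊆). -/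
open scoped Classical
open Finset

namespace GCC

variable {α ι : Type*} [Fintype α] [DecidableEq α] [Fintype ι] [DecidableEq ι]

variable {α ι : Type*} [Fintype α] [DecidableEq α] [Fintype ι] [DecidableEq ι]

/-! ### Auxiliary lemmas -/

section Aux

lemma collapse0 {β : Type*} [Fintype β] (A : β) (f : β → ℝ)
    {D : ∀ x, Decidable (A = x)} :
    (∑ x : β, @ite _ (A = x) (D x) (f x) 0) = f A := by
  refine Eq.trans (Finset.sum_eq_single A ?_ ?_) ?_
  · intro b _ hb; exact if_neg fun h => hb h.symm
  · intro h; exact absurd (Finset.mem_univ A) h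
  · exact if_pos rfl

lemma collapse1 {β : Type*} [Fintype β] (A : β) (p : β → Prop) (f : β → ℝ)
    {D1 : ∀ x, Decidable (p x ∧ A = x)} {D2 : Decidable (p A)} :
    (∑ x : β, @ite _ (p x ∧ A = x) (D1 x) (f x) 0) = @ite _ (p A) D2 (f A) 0 := by
  refine Eq.trans (Finset.sum_eq_single A ?_ ?_) ?_
  · intro b _ hb; exact if_neg fun h => hb h.2.symm
  · intro h; exact absurd (Finset.mem_univ A) h
  · by_cases h : p A
    · rw [if_pos ⟨h, rfl⟩, if_pos h]
    · rw [if_neg (fun hh => h hh.1), if_neg h]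

lemma collapse2 {β : Type*} [Fintype β] (A B : β) (p : β → β → Prop) (f : β → β → ℝ)
    {D1 : ∀ x y, Decidable (p x y ∧ A = x ∧ B = y)} {D2 : Decidable (p A B)} :
    (∑ x : β, ∑ y : β, @ite _ (p x y ∧ A = x ∧ B = y) (D1 x y) (f x y) 0)
      = @ite _ (p A B) D2 (f A B) 0 := by
  refine Eq.trans (Finset.sum_eq_single A ?_ ?_) ?_
  · intro b _ hb
    exact Finset.sum_eq_zero fun y _ => if_neg fun h => hb h.2.1.symm
  · intro h; exact absurd (Finset.mem_univ A) h
  · refine Eq.trans (Finset.sum_eq_single B ?_ ?_) ?_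
    · intro b _ hb; exact if_neg fun h => hb h.2.2.symm
    · intro h; exact absurd (Finset.mem_univ B) h
    · by_cases h : p A B
      · rw [if_pos ⟨h, rfl, rfl⟩, if_pos h]
      · rw [if_neg (fun hh => h hh.1), if_neg h]

lemma sum_comm3 {A B C : Type*} (s : Finset A) (t : Finset B) (u : Finset C)
    (f : A → B → C → ℝ) :
    (∑ a ∈ s, ∑ b ∈ t, ∑ c ∈ u, f a b c) = ∑ b ∈ t, ∑ c ∈ u, ∑ a ∈ s, f a b c :=
  calc (∑ a ∈ s, ∑ b ∈ t, ∑ c ∈ u, f a b c)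
      = ∑ b ∈ t, ∑ a ∈ s, ∑ c ∈ u, f a b c := Finset.sum_comm
    _ = ∑ b ∈ t, ∑ c ∈ u, ∑ a ∈ s, f a b c :=
        Finset.sum_congr rfl fun b _ => Finset.sum_comm

lemma sum_comm4 {A B C D : Type*} [Fintype A] [Fintype B] [Fintype C] [Fintype D]
    (f : A → B → C → D → ℝ) :
    (∑ a : A, ∑ b : B, ∑ c : C, ∑ d : D, f a b c d)
      = ∑ c : C, ∑ d : D, ∑ a : A, ∑ b : B, f a b c d :=
  calc (∑ a : A, ∑ b : B, ∑ c : C, ∑ d : D, f a b c d)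
      = ∑ a : A, ∑ c : C, ∑ d : D, ∑ b : B, f a b c d :=
        Finset.sum_congr rfl fun a _ => sum_comm3 _ _ _ _
    _ = ∑ c : C, ∑ d : D, ∑ a : A, ∑ b : B, f a b c d := sum_comm3 _ _ _ _

lemma ite_sum {β : Type*} {c : Prop} [Decidable c] (s : Finset β) (f : β → ℝ) :
    (if c then ∑ x ∈ s, f x else 0) = ∑ x ∈ s, if c then f x else 0 := by
  split_ifs with h
  · rfl
  · simp

lemma ite_split (a b : Prop) [Decidable a] [Decidable b] (x : ℝ) :
    (if a then x else 0) = (if a ∧ b then x else 0) + (if a ∧ ¬b then x else 0) := by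
  by_cases ha : a <;> by_cases hb : b <;> simp [ha, hb]

lemma down_chain (Fq : Finset (Finset α)) (hFe : (∅ : Finset α) ∈ Fq) :
    ∀ A ∈ Fq, ∃ (k : ℕ) (c : ℕ → Finset α), c 0 = ∅ ∧ c k = A ∧
      ∀ j < k, coverEdge Fq (c j) (c (j + 1)) := by
  intro A
  induction A using Finset.strongInductionOn with
  | _ A ih =>
    intro hA
    by_cases hAe : A = ∅
    · exact ⟨0, fun _ => ∅, rfl, by simp [hAe], fun j hj => absurd hj (Nat.not_lt_zero j)⟩
    · have hS : (∅ : Finset α) ∈ Fq.filter (· ⊂ A) := by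
        simp only [Finset.mem_filter]
        exact ⟨hFe, Finset.ssubset_iff_subset_ne.2 ⟨Finset.empty_subset A, Ne.symm hAe⟩⟩
      obtain ⟨A', hA'S, hmax⟩ :=
        Finset.exists_max_image (Fq.filter (· ⊂ A)) Finset.card ⟨∅, hS⟩
      rw [Finset.mem_filter] at hA'S
      obtain ⟨hA'F, hA'A⟩ := hA'S
      have hcov : coverEdge Fq A' A := by
        refine ⟨hA'F, hA, hA'A, ?_⟩
        intro K'' hK'' h1 h2
        by_contra hne
        have h3 : A' ⊂ K'' := Finset.ssubset_iff_subset_ne.2 ⟨h1, Ne.symm hne⟩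
        have h4 := hmax K'' (Finset.mem_filter.2 ⟨hK'', h2⟩)
        have h5 := Finset.card_lt_card h3
        omega
      obtain ⟨k, c, hc0, hck, hstep⟩ := ih A' hA'A hA'F
      refine ⟨k + 1, fun j => if j ≤ k then c j else A, by simp [hc0], by simp, ?_⟩
      intro j hj
      by_cases hjk : j < k
      · have h1 : j ≤ k := hjk.le
        have h2 : j + 1 ≤ k := hjk
        simpa [h1, h2] using hstep j hjk
      · have hj' : j = k := by omega
        subst hj'
        have h2 : ¬ (j + 1 ≤ j) := by omega
        simpa [h2, hck] using hcov

lemma up_chain (Fq : Finset (Finset α)) (Pq : Finset α) (hP : Pq ∈ Fq)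
    (hsub : ∀ K ∈ Fq, K ⊆ Pq) :
    ∀ B ∈ Fq, ∃ (k : ℕ) (c : ℕ → Finset α), c 0 = B ∧ c k = Pq ∧
      ∀ j < k, coverEdge Fq (c j) (c (j + 1)) := by
  suffices H : ∀ (n : ℕ), ∀ B ∈ Fq, (Pq \ B).card = n →
      ∃ (k : ℕ) (c : ℕ → Finset α), c 0 = B ∧ c k = Pq ∧
        ∀ j < k, coverEdge Fq (c j) (c (j + 1)) from
    fun B hB => H _ B hB rfl
  intro n
  induction n using Nat.strong_induction_on with
  | _ n ih =>
    intro B hB hcard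
    by_cases hBP : B = Pq
    · exact ⟨0, fun _ => Pq, by simp [hBP], rfl, fun j hj => absurd hj (Nat.not_lt_zero j)⟩
    · have hBPq : B ⊂ Pq := Finset.ssubset_iff_subset_ne.2 ⟨hsub B hB, hBP⟩
      have hPS : Pq ∈ Fq.filter (B ⊂ ·) := Finset.mem_filter.2 ⟨hP, hBPq⟩
      obtain ⟨B', hB'S, hmin⟩ :=
        Finset.exists_min_image (Fq.filter (B ⊂ ·)) Finset.card ⟨Pq, hPS⟩
      rw [Finset.mem_filter] at hB'S
      obtain ⟨hB'F, hBB'⟩ := hB'S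
      have hcov : coverEdge Fq B B' := by
        refine ⟨hB, hB'F, hBB', ?_⟩
        intro K'' hK'' h1 h2
        by_contra hne
        have h3 : B ⊂ K'' := Finset.ssubset_iff_subset_ne.2 ⟨h1, Ne.symm hne⟩
        have h4 := hmin K'' (Finset.mem_filter.2 ⟨hK'', h3⟩)
        have h5 := Finset.card_lt_card h2
        omega
      have hmeas : (Pq \ B').card < n := by
        have h1 : Pq \ B' ⊂ Pq \ B := by
          obtain ⟨x, hxB', hxB⟩ := Finset.exists_of_ssubset hBB'
          refine Finset.ssubset_iff_subset_ne.2
            ⟨Finset.sdiff_subset_sdiff (Finset.Subset.refl _) hBB'.subset, ?_⟩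
          intro h
          have h2 : x ∈ Pq \ B := Finset.mem_sdiff.2 ⟨hsub B' hB'F hxB', hxB⟩
          rw [← h] at h2
          exact (Finset.mem_sdiff.1 h2).2 hxB'
        have := Finset.card_lt_card h1
        omega
      obtain ⟨m, c, hc0, hcm, hstep⟩ := ih _ hmeas B' hB'F rfl
      refine ⟨m + 1, fun j => if j = 0 then B else c (j - 1), by simp, ?_, ?_⟩
      · have h1 : m + 1 ≠ 0 := by omega
        simp [h1, hcm]
      · intro j hj
        by_cases hj0 : j = 0
        · subst hj0
          simpa [hc0] using hcov
        · have h1 : j - 1 < m := by omega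
          have h2 := hstep (j - 1) h1
          have e1 : j - 1 + 1 = j := by omega
          rw [e1] at h2
          have h3 : j + 1 ≠ 0 := by omega
          have e2 : j + 1 - 1 = j := by omega
          simpa [hj0, h3, e2] using h2

lemma regular_cover_single (Fq : Finset (Finset α)) (Pq : Finset α)
    (hFe : (∅ : Finset α) ∈ Fq) (hP : Pq ∈ Fq) (hsub : ∀ K ∈ Fq, K ⊆ Pq)
    (hreg : RegularSystem Fq Pq) {A B : Finset α} (hAB : coverEdge Fq A B) :
    ∃ i, i ∉ A ∧ B = insert i A := by
  obtain ⟨hA, hBq, hABss, hlast⟩ := hAB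
  obtain ⟨k1, c1, h10, h1k, h1s⟩ := down_chain Fq hFe A hA
  obtain ⟨k2, c2, h20, h2k, h2s⟩ := up_chain Fq Pq hP hsub B hBq
  set n := k1 + 1 + k2 with hn
  set c : ℕ → Finset α := fun j => if j ≤ k1 then c1 j else c2 (j - (k1 + 1)) with hc
  have hck1 : c k1 = A := by simp [hc, h1k]
  have hck1' : c (k1 + 1) = B := by
    have h1 : ¬ (k1 + 1 ≤ k1) := by omega
    simp [hc, h1, h20]
  have hc0 : c 0 = ∅ := by simp [hc, h10]
  have hcn : c n = Pq := by
    have h1 : ¬ (k1 + 1 + k2 ≤ k1) := by omega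
    have h2 : k1 + 1 + k2 - (k1 + 1) = k2 := by omega
    simp [hc, hn, h1, h2, h2k]
  have hsteps : ∀ j < n, coverEdge Fq (c j) (c (j + 1)) := by
    intro j hj
    rcases lt_trichotomy j k1 with h | h | h
    · have h1 : j ≤ k1 := h.le
      have h2 : j + 1 ≤ k1 := h
      simpa [hc, h1, h2] using h1s j h
    · subst h
      rw [hck1, hck1']
      exact ⟨hA, hBq, hABss, hlast⟩
    · have e1 : ¬ (j ≤ k1) := by omega
      have e2 : ¬ (j + 1 ≤ k1) := by omega
      simp only [hc, if_neg e1, if_neg e2]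
      have h3 := h2s (j - (k1 + 1)) (by omega)
      have e3 : j - (k1 + 1) + 1 = j + 1 - (k1 + 1) := by omega
      rw [e3] at h3
      exact h3
  have hnP : n = Pq.card := hreg n c hc0 hcn hsteps
  have hmono : ∀ j < n, (c j).card < (c (j + 1)).card :=
    fun j hj => Finset.card_lt_card (hsteps j hj).2.2.1
  have hle : ∀ j, j ≤ n → j ≤ (c j).card := by
    intro j
    induction j with
    | zero => intro _; exact Nat.zero_le _
    | succ j ihj =>
      intro hj
      have h1 := ihj (by omega)
      have h2 := hmono j (by omega)
      omega
  have hge : ∀ d j, j + d = n → (c j).card ≤ j := by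
    intro d
    induction d with
    | zero =>
      intro j hj
      have h1 : j = n := by omega
      subst h1
      rw [hcn, ← hnP]
    | succ d ihd =>
      intro j hj
      have h1 := ihd (j + 1) (by omega)
      have h2 := hmono j (by omega)
      omega
  have hA1 : (c k1).card = k1 :=
    le_antisymm (hge (1 + k2) k1 (by omega)) (hle k1 (by omega))
  have hB1 : (c (k1 + 1)).card = k1 + 1 :=
    le_antisymm (hge k2 (k1 + 1) (by omega)) (hle (k1 + 1) (by omega))
  have hcard : B.card = A.card + 1 := by
    rw [← hck1, ← hck1', hA1, hB1]
  obtain ⟨i, hiB, hiA⟩ := Finset.exists_of_ssubset hABss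
  refine ⟨i, hiA, ?_⟩
  have hsub2 : insert i A ⊆ B := Finset.insert_subset hiB hABss.subset
  exact (Finset.eq_of_subset_of_card_le hsub2
    (by rw [Finset.card_insert_of_notMem hiA]; omega)).symm

end Aux

/-- **Corollary (conclude-2).** If the coalition configuration `P` is a partition of `N`,
or if each set system `(P_q, F_q)` is regular, then for any flow method `Φ` on
`G_{N,F,P}` the induced value `φ ◁ Φ` is a flow method on `G_{N,F⁰,P}` whose associated
flow passes through the directed edges of `Γ_{F⁰}`, the covering digraph of `(F⁰, ⊆)`. -/
theorem induced_flowMethod_on_reachable_cover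
    (P : ι → Finset α) (F : ι → Finset (Finset α)) (hconf : IsGCC P F)
    (hcond : (∀ q r : ι, q ≠ r → Disjoint (P q) (P r))
      ∨ ∀ q, RegularSystem (F q) (P q))
    (Φ : ((ι → Finset α) → ℝ) → α → ℝ) (hΦ : IsFlowMethod P F Φ) :
    setIsFlowMethod (ReachableSet F) (coverEdge (ReachableSet F))
      (fun v : Finset α → ℝ => Φ fun K => v (unionP K)) := by
  classical
  obtain ⟨hne, hcovN, hsubF, hFe, hFP⟩ := hconf
  obtain ⟨lam, hmarg, hflow, hval⟩ := hΦ
  -- basic facts about `unionP`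
  have humem : ∀ (i : α) (K : ι → Finset α), i ∈ unionP K ↔ ∃ q, i ∈ K q := by
    intro i K
    simp [unionP, Finset.mem_biUnion]
  have hu_empty : unionP (emptyProfile : ι → Finset α) = ∅ := by
    ext i
    simp [unionP, emptyProfile, Finset.mem_biUnion]
  have hu_eq_empty : ∀ K : ι → Finset α, unionP K = ∅ ↔ K = emptyProfile := by
    intro K
    constructor
    · intro h
      funext q
      have h2 : K q ⊆ unionP K := fun i hi => (humem i K).2 ⟨q, hi⟩
      rw [h] at h2
      exact Finset.subset_empty.mp h2
    · rintro rfl; exact hu_empty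
  have hu_P : unionP P = Finset.univ := by
    ext i
    simp only [unionP, Finset.mem_biUnion, Finset.mem_univ, true_and, iff_true]
    exact hcovN i
  have hmemRS : ∀ K : ι → Finset α, Feasible F K → unionP K ∈ ReachableSet F := by
    intro K hK
    simp only [ReachableSet, Finset.mem_filter, Finset.mem_univ, true_and]
    exact ⟨K, hK, rfl⟩
  -- structure of a product edge
  have hedge : ∀ K K' : ι → Finset α, prodEdge F K K' → ∃ q,
      Qset K K' = K' q \ K q ∧ unionP K ⊆ unionP K' ∧
      unionP K' = unionP K ∪ (K' q \ K q) ∧ coverEdge (F q) (K q) (K' q) ∧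
      (∀ r, r ≠ q → K' r = K r) := by
    rintro K K' ⟨hK, hK', q, hcq, hoth⟩
    have hQ : Qset K K' = K' q \ K q := by
      ext i
      simp only [Qset, Finset.mem_biUnion, Finset.mem_univ, true_and, Finset.mem_sdiff]
      constructor
      · rintro ⟨r, hr1, hr2⟩
        by_cases h : r = q
        · subst h; exact ⟨hr1, hr2⟩
        · rw [hoth r h] at hr1; exact absurd hr1 hr2
      · intro h
        exact ⟨q, h.1, h.2⟩
    have hss : unionP K ⊆ unionP K' := by
      intro i hi
      rcases (humem i K).1 hi with ⟨r, hr⟩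
      apply (humem i K').2
      by_cases h : r = q
      · exact ⟨q, hcq.2.2.1.subset (h ▸ hr)⟩
      · exact ⟨r, (hoth r h).symm ▸ hr⟩
    refine ⟨q, hQ, hss, ?_, hcq, hoth⟩
    ext i
    simp only [Finset.mem_union, Finset.mem_sdiff, humem]
    constructor
    · rintro ⟨r, hr⟩
      by_cases h : r = q
      · by_cases h2 : i ∈ K q
        · exact Or.inl ⟨q, h2⟩
        · exact Or.inr ⟨h ▸ hr, h2⟩
      · exact Or.inl ⟨r, (hoth r h) ▸ hr⟩
    · rintro (⟨r, hr⟩ | ⟨h1, _⟩)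
      · by_cases h : r = q
        · exact ⟨q, hcq.2.2.1.subset (h ▸ hr)⟩
        · exact ⟨r, (hoth r h).symm ▸ hr⟩
      · exact ⟨q, h1⟩
  -- the key lemma: a product edge that changes the union induces a covering edge of `F⁰`
  have keyA : ∀ K K' : ι → Finset α, prodEdge F K K' → unionP K ≠ unionP K' →
      coverEdge (ReachableSet F) (unionP K) (unionP K') ∧
      unionP K' \ unionP K = Qset K K' := by
    intro K K' e hneU
    obtain ⟨q, hQ, hss, huu, hcq, hoth⟩ := hedge K K' e
    obtain ⟨hK, hK', -⟩ := e
    have hmemK := hmemRS K hK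
    have hmemK' := hmemRS K' hK'
    rcases hcond with hdis | hreg
    · -- partition case
      have hdisj : ∀ i ∈ K' q \ K q, i ∉ unionP K := by
        intro i hi hiK
        rcases (humem i K).1 hiK with ⟨r, hr⟩
        rcases Finset.mem_sdiff.1 hi with ⟨hi1, hi2⟩
        by_cases h : r = q
        · subst h; exact hi2 hr
        · exact Finset.disjoint_left.1 (hdis q r fun hqr => h hqr.symm)
            (hsubF q _ (hK' q) hi1) (hsubF r _ (hK r) hr)
      have hdiff : unionP K' \ unionP K = Qset K K' := by
        rw [hQ]
        ext i
        constructor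
        · intro hi
          rcases Finset.mem_sdiff.1 hi with ⟨h1, h2⟩
          rw [huu] at h1
          rcases Finset.mem_union.1 h1 with h | h
          · exact absurd h h2
          · exact h
        · intro h
          exact Finset.mem_sdiff.2 ⟨huu ▸ Finset.mem_union_right _ h, hdisj i h⟩
      refine ⟨⟨hmemK, hmemK',
        Finset.ssubset_iff_subset_ne.2 ⟨hss, hneU⟩, ?_⟩, hdiff⟩
      intro R'' hR'' h1 h2
      have hR''2 : ∃ L : ι → Finset α, Feasible F L ∧ unionP L = R'' := by
        simpa [ReachableSet] using hR''
      obtain ⟨L, hL, rfl⟩ := hR''2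
      have hinter : ∀ (Mm : ι → Finset α), Feasible F Mm → ∀ r,
          unionP Mm ∩ P r = Mm r := by
        intro Mm hMm r
        ext i
        simp only [Finset.mem_inter]
        constructor
        · rintro ⟨h3, h4⟩
          rcases (humem i Mm).1 h3 with ⟨s, hs⟩
          by_cases h : s = r
          · exact h ▸ hs
          · exact absurd h4 (Finset.disjoint_left.1 (hdis s r h)
              (hsubF s _ (hMm s) hs))
        · intro h3
          exact ⟨(humem i Mm).2 ⟨r, h3⟩, hsubF r _ (hMm r) h3⟩
      have hLr : ∀ r, K r ⊆ L r ∧ L r ⊆ K' r := by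
        intro r
        constructor
        · rw [← hinter K hK r, ← hinter L hL r]
          exact Finset.inter_subset_inter h1 (Finset.Subset.refl _)
        · rw [← hinter L hL r, ← hinter K' hK' r]
          exact Finset.inter_subset_inter h2.subset (Finset.Subset.refl _)
      by_cases hLq : L q = K' q
      · exfalso
        have hLK' : L = K' := by
          funext r
          by_cases h : r = q
          · subst h; exact hLq
          · exact Finset.Subset.antisymm ((hoth r h) ▸ (hLr r).2) ((hoth r h) ▸ (hLr r).1)
        exact h2.ne (hLK' ▸ rfl)
      · have hLqK : L q = K q :=
          hcq.2.2.2 (L q) (hL q) (hLr q).1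
            (Finset.ssubset_iff_subset_ne.2 ⟨(hLr q).2, hLq⟩)
        have hLK : L = K := by
          funext r
          by_cases h : r = q
          · subst h; exact hLqK
          · exact Finset.Subset.antisymm ((hoth r h) ▸ (hLr r).2) ((hLr r).1)
        rw [hLK]
    · -- regular case
      obtain ⟨i, hiA, hB⟩ :=
        regular_cover_single (F q) (P q) (hFe q) (hFP q) (hsubF q) (hreg q) hcq
      have hQi : K' q \ K q = {i} := by
        rw [hB]
        ext x
        simp only [Finset.mem_sdiff, Finset.mem_insert, Finset.mem_singleton]
        constructor
        · rintro ⟨h | h, h2⟩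
          · exact h
          · exact absurd h h2
        · rintro rfl; exact ⟨Or.inl rfl, hiA⟩
      have huu' : unionP K' = insert i (unionP K) := by
        rw [huu, hQi]
        ext x
        simp only [Finset.mem_union, Finset.mem_singleton, Finset.mem_insert]
        tauto
      have hiu : i ∉ unionP K := by
        intro h
        exact hneU ((huu'.trans (Finset.insert_eq_self.2 h)).symm)
      have hdiff : unionP K' \ unionP K = Qset K K' := by
        rw [hQ, hQi, huu']
        ext x
        simp only [Finset.mem_sdiff, Finset.mem_insert, Finset.mem_singleton]
        constructor
        · rintro ⟨h | h, h2⟩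
          · exact h
          · exact absurd h h2
        · rintro rfl; exact ⟨Or.inl rfl, hiu⟩
      refine ⟨⟨hmemK, hmemK', huu' ▸ Finset.ssubset_insert hiu, ?_⟩, hdiff⟩
      intro R'' _ h1 h2
      rw [huu'] at h2
      by_cases hiR : i ∈ R''
      · exact absurd (Finset.Subset.antisymm h2.subset (Finset.insert_subset hiR h1))
          h2.ne
      · refine Finset.Subset.antisymm ?_ h1
        intro x hx
        rcases Finset.mem_insert.1 (h2.subset hx) with rfl | h
        · exact absurd hx hiR
        · exact h
  -- the induced coefficient functions on `F⁰`
  set F0 := ReachableSet F with hF0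
  set lam0 : α → Finset α → Finset α → ℝ := fun i R R' =>
    ∑ K : ι → Finset α, ∑ K' : ι → Finset α,
      if agentEdge F i K K' ∧ unionP K = R ∧ unionP K' = R' then lam i K K' else 0
    with hlam0
  -- the edge flow of `lam0` on covering edges is the cross-fiber flow
  have hB : ∀ R R' : Finset α, R ≠ R' →
      (∑ i ∈ R' \ R, lam0 i R R')
        = ∑ K : ι → Finset α, ∑ K' : ι → Finset α,
            if prodEdge F K K' ∧ unionP K = R ∧ unionP K' = R' then
              edgeFlow lam K K' else 0 := by
    intro R R' hRR'
    rw [hlam0]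
    rw [sum_comm3 (R' \ R) Finset.univ Finset.univ
      (fun i K K' => if agentEdge F i K K' ∧ unionP K = R ∧ unionP K' = R' then
        lam i K K' else 0)]
    refine Finset.sum_congr rfl fun K _ => Finset.sum_congr rfl fun K' _ => ?_
    by_cases hc : prodEdge F K K' ∧ unionP K = R ∧ unionP K' = R'
    · rw [if_pos hc]
      obtain ⟨he, h1, h2⟩ := hc
      have hKK' : unionP K ≠ unionP K' := by rw [h1, h2]; exact hRR'
      have hQd : unionP K' \ unionP K = Qset K K' := (keyA K K' he hKK').2
      have hRQ : R' \ R = Qset K K' := by rw [← h1, ← h2]; exact hQd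
      rw [hRQ]
      refine Finset.sum_congr rfl fun i hi => ?_
      exact if_pos ⟨⟨he, hi⟩, h1, h2⟩
    · rw [if_neg hc]
      refine Finset.sum_eq_zero fun i _ => ?_
      rw [if_neg]
      rintro ⟨⟨he, -⟩, h1, h2⟩
      exact hc ⟨he, h1, h2⟩
  -- inflow side of a fiber, rewritten as a cross-fiber sum
  have hside : ∀ R : Finset α,
      (∑ R' : Finset α, if coverEdge F0 R' R then (∑ i ∈ R \ R', lam0 i R' R) else 0)
      = ∑ a : ι → Finset α, ∑ b : ι → Finset α,
          if (prodEdge F a b ∧ unionP b = R) ∧ ¬ (unionP a = R) then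
            edgeFlow lam a b else 0 := by
    intro R
    have e1 : ∀ R' : Finset α,
        (if coverEdge F0 R' R then (∑ i ∈ R \ R', lam0 i R' R) else 0)
        = ∑ a : ι → Finset α, ∑ b : ι → Finset α,
            if coverEdge F0 R' R ∧ prodEdge F a b ∧ unionP a = R' ∧ unionP b = R then
              edgeFlow lam a b else 0 := by
      intro R'
      by_cases hcov : coverEdge F0 R' R
      · rw [if_pos hcov, hB R' R (Finset.ssubset_iff_subset_ne.1 hcov.2.2.1).2]
        refine Finset.sum_congr rfl fun a _ => Finset.sum_congr rfl fun b _ => ?_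
        by_cases h2 : prodEdge F a b ∧ unionP a = R' ∧ unionP b = R
        · rw [if_pos h2, if_pos ⟨hcov, h2⟩]
        · rw [if_neg h2, if_neg fun h => h2 h.2]
      · rw [if_neg hcov]
        exact (Finset.sum_eq_zero fun a _ =>
          Finset.sum_eq_zero fun b _ => if_neg fun h => hcov h.1).symm
    rw [Finset.sum_congr rfl fun R' _ => e1 R']
    rw [sum_comm3 Finset.univ Finset.univ Finset.univ
      (fun R' a b => if coverEdge F0 R' R ∧ prodEdge F a b ∧ unionP a = R' ∧
        unionP b = R then edgeFlow lam a b else 0)]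
    refine Finset.sum_congr rfl fun a _ => Finset.sum_congr rfl fun b _ => ?_
    have e2 : ∀ R' : Finset α,
        (if coverEdge F0 R' R ∧ prodEdge F a b ∧ unionP a = R' ∧ unionP b = R then
          edgeFlow lam a b else 0)
        = if (coverEdge F0 R' R ∧ prodEdge F a b ∧ unionP b = R) ∧ unionP a = R' then
            edgeFlow lam a b else 0 :=
      fun R' => if_congr (by tauto) rfl rfl
    rw [Finset.sum_congr rfl fun R' _ => e2 R']
    refine Eq.trans
      (b := if coverEdge F0 (unionP a) R ∧ prodEdge F a b ∧ unionP b = R then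
        edgeFlow lam a b else 0)
      (collapse1 (unionP a)
        (fun R' => coverEdge F0 R' R ∧ prodEdge F a b ∧ unionP b = R)
        (fun _ => edgeFlow lam a b)) ?_
    refine if_congr ?_ rfl rfl
    constructor
    · rintro ⟨hcov, he, hub⟩
      exact ⟨⟨he, hub⟩, (Finset.ssubset_iff_subset_ne.1 hcov.2.2.1).2⟩
    · rintro ⟨⟨he, hub⟩, hna⟩
      have hneq : unionP a ≠ unionP b := by rw [hub]; exact hna
      exact ⟨hub ▸ (keyA a b he hneq).1, he, hub⟩
  -- outflow side of a fiber, rewritten as a cross-fiber sum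
  have hsideOut : ∀ R : Finset α,
      (∑ R' : Finset α, if coverEdge F0 R R' then (∑ i ∈ R' \ R, lam0 i R R') else 0)
      = ∑ a : ι → Finset α, ∑ b : ι → Finset α,
          if (prodEdge F a b ∧ unionP a = R) ∧ ¬ (unionP b = R) then
            edgeFlow lam a b else 0 := by
    intro R
    have e1 : ∀ R' : Finset α,
        (if coverEdge F0 R R' then (∑ i ∈ R' \ R, lam0 i R R') else 0)
        = ∑ a : ι → Finset α, ∑ b : ι → Finset α,
            if coverEdge F0 R R' ∧ prodEdge F a b ∧ unionP a = R ∧ unionP b = R' then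
              edgeFlow lam a b else 0 := by
      intro R'
      by_cases hcov : coverEdge F0 R R'
      · rw [if_pos hcov, hB R R' (Finset.ssubset_iff_subset_ne.1 hcov.2.2.1).2]
        refine Finset.sum_congr rfl fun a _ => Finset.sum_congr rfl fun b _ => ?_
        by_cases h2 : prodEdge F a b ∧ unionP a = R ∧ unionP b = R'
        · rw [if_pos h2, if_pos ⟨hcov, h2⟩]
        · rw [if_neg h2, if_neg fun h => h2 h.2]
      · rw [if_neg hcov]
        exact (Finset.sum_eq_zero fun a _ =>
          Finset.sum_eq_zero fun b _ => if_neg fun h => hcov h.1).symm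
    rw [Finset.sum_congr rfl fun R' _ => e1 R']
    rw [sum_comm3 Finset.univ Finset.univ Finset.univ
      (fun R' a b => if coverEdge F0 R R' ∧ prodEdge F a b ∧ unionP a = R ∧
        unionP b = R' then edgeFlow lam a b else 0)]
    refine Finset.sum_congr rfl fun a _ => Finset.sum_congr rfl fun b _ => ?_
    have e2 : ∀ R' : Finset α,
        (if coverEdge F0 R R' ∧ prodEdge F a b ∧ unionP a = R ∧ unionP b = R' then
          edgeFlow lam a b else 0)
        = if (coverEdge F0 R R' ∧ prodEdge F a b ∧ unionP a = R) ∧ unionP b = R' then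
            edgeFlow lam a b else 0 :=
      fun R' => if_congr (by tauto) rfl rfl
    rw [Finset.sum_congr rfl fun R' _ => e2 R']
    refine Eq.trans
      (b := if coverEdge F0 R (unionP b) ∧ prodEdge F a b ∧ unionP a = R then
        edgeFlow lam a b else 0)
      (collapse1 (unionP b)
        (fun R' => coverEdge F0 R R' ∧ prodEdge F a b ∧ unionP a = R)
        (fun _ => edgeFlow lam a b)) ?_
    refine if_congr ?_ rfl rfl
    constructor
    · rintro ⟨hcov, he, hua⟩
      exact ⟨⟨he, hua⟩, fun h =>
        (Finset.ssubset_iff_subset_ne.1 hcov.2.2.1).2 h.symm⟩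
    · rintro ⟨⟨he, hua⟩, hnb⟩
      have hneq : unionP a ≠ unionP b := by rw [hua]; exact fun h => hnb h.symm
      exact ⟨hua ▸ (keyA a b he hneq).1, he, hua⟩
  refine ⟨lam0, ?_, ?_, ?_⟩
  · -- marginalist
    intro v hv i
    have hv0 : (fun K : ι → Finset α => v (unionP K)) emptyProfile = 0 := by
      show v (unionP (emptyProfile : ι → Finset α)) = 0
      rw [hu_empty, hv]
    show Φ (fun K => v (unionP K)) i = _
    rw [hmarg _ hv0 i]
    have step1 : (∑ K : ι → Finset α, ∑ K' : ι → Finset α,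
        if agentEdge F i K K' then
          lam i K K' * (v (unionP K') - v (unionP K)) else 0)
      = ∑ K : ι → Finset α, ∑ K' : ι → Finset α,
        if ((coverEdge F0 (unionP K) (unionP K') ∧ i ∈ unionP K' \ unionP K) ∧
            agentEdge F i K K') then
          lam i K K' * (v (unionP K') - v (unionP K)) else 0 := by
      refine Finset.sum_congr rfl fun K _ => Finset.sum_congr rfl fun K' _ => ?_
      by_cases hae : agentEdge F i K K'
      · by_cases hU : unionP K = unionP K'
        · rw [if_pos hae,
            if_neg (fun h => (Finset.ssubset_iff_subset_ne.1 h.1.1.2.2.1).2 hU)]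
          rw [hU]
          ring
        · obtain ⟨hcov2, hdiff⟩ := keyA K K' hae.1 hU
          rw [if_pos hae,
            if_pos ⟨⟨hcov2, by rw [hdiff]; exact hae.2⟩, hae⟩]
      · rw [if_neg hae, if_neg (fun h => hae h.2)]
    rw [step1]
    have step2 : ∀ K K' : ι → Finset α,
        (if ((coverEdge F0 (unionP K) (unionP K') ∧ i ∈ unionP K' \ unionP K) ∧
            agentEdge F i K K') then
          lam i K K' * (v (unionP K') - v (unionP K)) else 0)
        = ∑ R : Finset α, ∑ R' : Finset α,
            if ((coverEdge F0 R R' ∧ i ∈ R' \ R) ∧ agentEdge F i K K') ∧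
                unionP K = R ∧ unionP K' = R' then
              lam i K K' * (v R' - v R) else 0 :=
      fun K K' => (collapse2 (unionP K) (unionP K')
        (fun R R' => (coverEdge F0 R R' ∧ i ∈ R' \ R) ∧ agentEdge F i K K')
        (fun R R' => lam i K K' * (v R' - v R))).symm
    rw [Finset.sum_congr rfl fun K _ => Finset.sum_congr rfl fun K' _ => step2 K K']
    rw [sum_comm4 (fun K K' R R' =>
      if ((coverEdge F0 R R' ∧ i ∈ R' \ R) ∧ agentEdge F i K K') ∧
          unionP K = R ∧ unionP K' = R' then
        lam i K K' * (v R' - v R) else 0)]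
    refine Finset.sum_congr rfl fun R _ => Finset.sum_congr rfl fun R' _ => ?_
    by_cases hc : coverEdge F0 R R' ∧ i ∈ R' \ R
    · rw [if_pos hc]
      show _ = (∑ K : ι → Finset α, ∑ K' : ι → Finset α,
        if agentEdge F i K K' ∧ unionP K = R ∧ unionP K' = R' then
          lam i K K' else 0) * (v R' - v R)
      rw [Finset.sum_mul]
      refine Finset.sum_congr rfl fun K _ => ?_
      rw [Finset.sum_mul]
      refine Finset.sum_congr rfl fun K' _ => ?_
      rw [ite_mul, zero_mul]
      by_cases h2 : agentEdge F i K K' ∧ unionP K = R ∧ unionP K' = R'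
      · rw [if_pos ⟨⟨hc, h2.1⟩, h2.2⟩, if_pos h2]
      · rw [if_neg (fun h => h2 ⟨h.1.2, h.2⟩), if_neg h2]
    · rw [if_neg hc]
      exact Finset.sum_eq_zero fun K _ =>
        Finset.sum_eq_zero fun K' _ => if_neg fun h => hc h.1.1
  · -- flow conservation
    intro R hR hRne hRuniv
    show (∑ R' : Finset α, if coverEdge F0 R' R then (∑ i ∈ R \ R', lam0 i R' R) else 0)
        = ∑ R' : Finset α, if coverEdge F0 R R' then (∑ i ∈ R' \ R, lam0 i R R') else 0
    rw [hside R, hsideOut R]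
    -- conservation of the original flow, summed over the fiber of `R`
    have hcons0 : (∑ K : ι → Finset α, if unionP K = R then
          (∑ K'' : ι → Finset α, if prodEdge F K'' K then edgeFlow lam K'' K else 0)
          else 0)
        = ∑ K : ι → Finset α, if unionP K = R then
            (∑ K'' : ι → Finset α, if prodEdge F K K'' then edgeFlow lam K K'' else 0)
            else 0 := by
      refine Finset.sum_congr rfl fun K _ => ?_
      by_cases hu : unionP K = R
      · rw [if_pos hu, if_pos hu]
        by_cases hfeas : Feasible F K
        · exact hflow K hfeas
            (fun h => hRne (by rw [← hu, h, hu_empty]))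
            (fun h => hRuniv (by rw [← hu, h, hu_P]))
        · rw [Finset.sum_eq_zero fun K'' _ => if_neg fun h => hfeas h.2.1,
            Finset.sum_eq_zero fun K'' _ => if_neg fun h => hfeas h.1]
      · rw [if_neg hu, if_neg hu]
    have hIn : (∑ K : ι → Finset α, if unionP K = R then
          (∑ K'' : ι → Finset α, if prodEdge F K'' K then edgeFlow lam K'' K else 0)
          else 0)
        = ∑ a : ι → Finset α, ∑ b : ι → Finset α,
            if prodEdge F a b ∧ unionP b = R then edgeFlow lam a b else 0 := by
      have e : ∀ K : ι → Finset α, (if unionP K = R then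
            (∑ K'' : ι → Finset α, if prodEdge F K'' K then edgeFlow lam K'' K else 0)
            else 0)
          = ∑ K'' : ι → Finset α,
              if prodEdge F K'' K ∧ unionP K = R then edgeFlow lam K'' K else 0 := by
        intro K
        rw [ite_sum]
        refine Finset.sum_congr rfl fun K'' _ => ?_
        by_cases h1 : unionP K = R <;> by_cases h2 : prodEdge F K'' K <;>
          simp [h1, h2]
      rw [Finset.sum_congr rfl fun K _ => e K]
      exact Finset.sum_comm
    have hOut : (∑ K : ι → Finset α, if unionP K = R then
          (∑ K'' : ι → Finset α, if prodEdge F K K'' then edgeFlow lam K K'' else 0)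
          else 0)
        = ∑ a : ι → Finset α, ∑ b : ι → Finset α,
            if prodEdge F a b ∧ unionP a = R then edgeFlow lam a b else 0 := by
      refine Finset.sum_congr rfl fun K _ => ?_
      rw [ite_sum]
      refine Finset.sum_congr rfl fun K'' _ => ?_
      by_cases h1 : unionP K = R <;> by_cases h2 : prodEdge F K K'' <;>
        simp [h1, h2]
    have hsplitIn : (∑ a : ι → Finset α, ∑ b : ι → Finset α,
          if prodEdge F a b ∧ unionP b = R then edgeFlow lam a b else 0)
        = (∑ a : ι → Finset α, ∑ b : ι → Finset α,
            if (prodEdge F a b ∧ unionP b = R) ∧ unionP a = R then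
              edgeFlow lam a b else 0)
          + ∑ a : ι → Finset α, ∑ b : ι → Finset α,
              if (prodEdge F a b ∧ unionP b = R) ∧ ¬ (unionP a = R) then
                edgeFlow lam a b else 0 := by
      rw [← Finset.sum_add_distrib]
      refine Finset.sum_congr rfl fun a _ => ?_
      rw [← Finset.sum_add_distrib]
      exact Finset.sum_congr rfl fun b _ => ite_split _ _ _
    have hsplitOut : (∑ a : ι → Finset α, ∑ b : ι → Finset α,
          if prodEdge F a b ∧ unionP a = R then edgeFlow lam a b else 0)
        = (∑ a : ι → Finset α, ∑ b : ι → Finset α,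
            if (prodEdge F a b ∧ unionP a = R) ∧ unionP b = R then
              edgeFlow lam a b else 0)
          + ∑ a : ι → Finset α, ∑ b : ι → Finset α,
              if (prodEdge F a b ∧ unionP a = R) ∧ ¬ (unionP b = R) then
                edgeFlow lam a b else 0 := by
      rw [← Finset.sum_add_distrib]
      refine Finset.sum_congr rfl fun a _ => ?_
      rw [← Finset.sum_add_distrib]
      exact Finset.sum_congr rfl fun b _ => ite_split _ _ _
    have hint : (∑ a : ι → Finset α, ∑ b : ι → Finset α,
          if (prodEdge F a b ∧ unionP b = R) ∧ unionP a = R then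
            edgeFlow lam a b else 0)
        = ∑ a : ι → Finset α, ∑ b : ι → Finset α,
            if (prodEdge F a b ∧ unionP a = R) ∧ unionP b = R then
              edgeFlow lam a b else 0 :=
      Finset.sum_congr rfl fun a _ => Finset.sum_congr rfl fun b _ =>
        if_congr (by tauto) rfl rfl
    linarith [hcons0, hIn, hOut, hsplitIn, hsplitOut, hint]
  · -- flow value 1
    show (∑ R' : Finset α, if coverEdge F0 ∅ R' then
        (∑ i ∈ R' \ (∅ : Finset α), lam0 i ∅ R') else 0) = 1
    rw [hsideOut ∅]
    have e1 : ∀ a b : ι → Finset α,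
        (if (prodEdge F a b ∧ unionP a = ∅) ∧ ¬ (unionP b = ∅) then
          edgeFlow lam a b else 0)
        = if prodEdge F a b ∧ emptyProfile = a then edgeFlow lam a b else 0 := by
      intro a b
      refine if_congr ?_ rfl rfl
      constructor
      · rintro ⟨⟨he, hua⟩, -⟩
        exact ⟨he, ((hu_eq_empty a).1 hua).symm⟩
      · rintro ⟨he, ha⟩
        have hua : unionP a = ∅ := (hu_eq_empty a).2 ha.symm
        refine ⟨⟨he, hua⟩, fun hub => ?_⟩
        obtain ⟨q, -, -, -, hcq, -⟩ := hedge a b he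
        have ha2 : a q = ∅ := by rw [← ha]; rfl
        have hb2 : b q = ∅ := by
          have := (hu_eq_empty b).1 hub
          rw [this]; rfl
        rw [ha2, hb2] at hcq
        exact (Finset.ssubset_iff_subset_ne.1 hcq.2.2.1).2 rfl
    rw [Finset.sum_congr rfl fun a _ => Finset.sum_congr rfl fun b _ => e1 a b]
    have e2 : ∀ a : ι → Finset α,
        (∑ b : ι → Finset α,
          if prodEdge F a b ∧ emptyProfile = a then edgeFlow lam a b else 0)
        = if (emptyProfile : ι → Finset α) = a then
            (∑ b : ι → Finset α,
              if prodEdge F a b then edgeFlow lam a b else 0) else 0 := by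
      intro a
      by_cases ha : (emptyProfile : ι → Finset α) = a
      · rw [if_pos ha]
        refine Finset.sum_congr rfl fun b _ => ?_
        by_cases h2 : prodEdge F a b
        · rw [if_pos ⟨h2, ha⟩, if_pos h2]
        · rw [if_neg fun h => h2 h.1, if_neg h2]
      · rw [if_neg ha]
        exact Finset.sum_eq_zero fun b _ => if_neg fun h => ha h.2
    rw [Finset.sum_congr rfl fun a _ => e2 a]
    exact Eq.trans (collapse0 (emptyProfile : ι → Finset α)
        (fun a => ∑ b : ι → Finset α,
          if prodEdge F a b then edgeFlow lam a b else 0)) hval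
end GCC
end
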